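/- arXiv:2212.01797 — 11 statements merged into one kernel-verified Lean document; each statement's English description precedes it below -/
import Mathlib

section
/- Let 𝒜 be an abelian category equipped with a ring homomorphism R → End(id_𝒜) and let π ∈ R, and let f : M → N be a morphism in 𝒜. (1) If there exists a morphism g : N → M with g∘f = π·id_M and f∘g = π·id_N, then f is a π-isomorphism. (2) Conversely, if f is a π-isomorphism, then there exists a morphism g : N → M such that g∘f = π²·id_M and f∘g = π²·id_N. -/
open CategoryTheory CategoryTheory.Limits

/-- **Lemma 3.2** (Abbes–Gros 2.6.3). Let `𝒜` be an abelian category equipped with a ring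
homomorphism `R → End(id_𝒜)` (e.g. an `R`-linear abelian category, where `π ∈ R` acts on every
object `M` as `π • 𝟙 M`), and let `f : M ⟶ N` be a morphism in `𝒜`.
(1) If there exists `g : N ⟶ M` with `g ∘ f = π • id_M` and `f ∘ g = π • id_N`, then `f` is a
`π`-isomorphism (its kernel and cokernel are `π`-null).
(2) Conversely, if `f` is a `π`-isomorphism, then there exists `g : N ⟶ M` with
`g ∘ f = π² • id_M` and `f ∘ g = π² • id_N`. -/
theorem pi_iso_retract {R : Type*} [CommRing R] {A : Type*} [Category A] [Abelian A]
    [CategoryTheory.Linear R A] (π : R) {M N : A} (f : M ⟶ N) :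
    ((∃ g : N ⟶ M, f ≫ g = π • 𝟙 M ∧ g ≫ f = π • 𝟙 N) →
      (π • 𝟙 (kernel f) = 0 ∧ π • 𝟙 (cokernel f) = 0)) ∧
    ((π • 𝟙 (kernel f) = 0 ∧ π • 𝟙 (cokernel f) = 0) →
      ∃ g : N ⟶ M, f ≫ g = (π ^ 2) • 𝟙 M ∧ g ≫ f = (π ^ 2) • 𝟙 N) := by
  constructor
  · rintro ⟨g, hfg, hgf⟩
    constructor
    · rw [← cancel_mono (kernel.ι f)]
      rw [Linear.smul_comp, Category.id_comp, zero_comp,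
        show π • kernel.ι f = kernel.ι f ≫ (π • 𝟙 M) by
          rw [Linear.comp_smul, Category.comp_id],
        ← hfg, ← Category.assoc, kernel.condition, zero_comp]
    · rw [← cancel_epi (cokernel.π f)]
      rw [Linear.comp_smul, Category.comp_id, comp_zero,
        show π • cokernel.π f = (π • 𝟙 N) ≫ cokernel.π f by
          rw [Linear.smul_comp, Category.id_comp],
        ← hgf, Category.assoc, cokernel.condition, comp_zero]
  · rintro ⟨hk, hc⟩
    have hu0 : kernel.ι f ≫ (π • 𝟙 M) = 0 := by
      rw [Linear.comp_smul, Category.comp_id,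
        show π • kernel.ι f = (π • 𝟙 _) ≫ kernel.ι f by
          rw [Linear.smul_comp, Category.id_comp],
        hk, zero_comp]
    have hv0 : (π • 𝟙 N) ≫ cokernel.π f = 0 := by
      rw [Linear.smul_comp, Category.id_comp,
        show π • cokernel.π f = cokernel.π f ≫ (π • 𝟙 _) by
          rw [Linear.comp_smul, Category.comp_id],
        hc, comp_zero]
    let u : Abelian.coimage f ⟶ M := cokernel.desc _ (π • 𝟙 M) hu0
    let v : N ⟶ Abelian.image f := kernel.lift _ (π • 𝟙 N) hv0
    have hu : Abelian.coimage.π f ≫ u = π • 𝟙 M := cokernel.π_desc _ _ _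
    have hv : v ≫ Abelian.image.ι f = π • 𝟙 N := kernel.lift_ι _ _ _
    have hu' : u ≫ Abelian.coimage.π f = π • 𝟙 (Abelian.coimage f) := by
      rw [← cancel_epi (Abelian.coimage.π f), ← Category.assoc, hu,
        Linear.smul_comp, Category.id_comp, Linear.comp_smul, Category.comp_id]
    have hv' : Abelian.image.ι f ≫ v = π • 𝟙 (Abelian.image f) := by
      rw [← cancel_mono (Abelian.image.ι f), Category.assoc, hv,
        Linear.comp_smul, Category.comp_id, Linear.smul_comp, Category.id_comp]
    refine ⟨v ≫ inv (Abelian.coimageImageComparison f) ≫ u, ?_, ?_⟩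
    · have hf := Abelian.coimage_image_factorisation f
      calc f ≫ v ≫ inv (Abelian.coimageImageComparison f) ≫ u
          = (Abelian.coimage.π f ≫ Abelian.coimageImageComparison f ≫
              Abelian.image.ι f) ≫ v ≫ inv (Abelian.coimageImageComparison f) ≫ u := by
            rw [hf]
        _ = (π ^ 2) • 𝟙 M := by
            rw [Category.assoc, Category.assoc, ← Category.assoc (Abelian.image.ι f), hv',
              Linear.smul_comp, Category.id_comp, Linear.comp_smul,
              ← Category.assoc (Abelian.coimageImageComparison f), IsIso.hom_inv_id,
              Category.id_comp, Linear.comp_smul, hu, smul_smul, ← pow_two]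
    · have hf := Abelian.coimage_image_factorisation f
      calc (v ≫ inv (Abelian.coimageImageComparison f) ≫ u) ≫ f
          = (v ≫ inv (Abelian.coimageImageComparison f) ≫ u) ≫
              Abelian.coimage.π f ≫ Abelian.coimageImageComparison f ≫
              Abelian.image.ι f := by rw [hf]
        _ = (π ^ 2) • 𝟙 N := by
            rw [Category.assoc, Category.assoc, ← Category.assoc u, hu',
              Linear.smul_comp, Category.id_comp, Linear.comp_smul,
              IsIso.inv_hom_id_assoc, Linear.comp_smul, hv, smul_smul, ← pow_two]
end

section
/- Let 𝒜 be an abelian category equipped with a ring homomorphism R → End(id_𝒜), π ∈ R, and let f : M^• → N^• be a morphism of cochain complexes in 𝒜 such that M^i = N^i = 0 for all i > 0, and suppose there is n ∈ ℕ such that for every −n ≤ i ≤ 0 the object M^i is projective and π·H^i(N^•) = 0. Then there exist morphisms s^i : M^i → N^{i−1} for −n ≤ i ≤ 0 (and setting s^1 = 0) such that π^{1−i}·f^i = π·s^{i+1}∘d_M^i + d_N^{i−1}∘s^i for all −n ≤ i ≤ 0. In particular, for all −n ≤ i ≤ 0 one has π^{n+1}·f^i = (π^{n+i+1}·s^{i+1})∘d_M^i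 + d_N^{i−1}∘(π^{n+i}·s^i), so π^{n+1}·f is null-homotopic in degrees ≥ −n after canonical truncation. -/
open CategoryTheory CategoryTheory.Limits

lemma pi_exact_homotopy_eqToHom_d {A : Type*} [Category A] [Preadditive A]
    (K : CochainComplex A ℤ) {a b : ℤ} (h : a = b) (c : ℤ) :
    eqToHom (congrArg K.X h) ≫ K.d b c = K.d a c := by
  subst h; simp

lemma pi_exact_homotopy_key {R : Type*} [CommRing R] {A : Type*} [Category A] [Abelian A]
    [CategoryTheory.Linear R A] (π : R) (N : CochainComplex A ℤ) (i : ℤ) {P : A} [Projective P]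
    (g : P ⟶ N.X i) (hg : g ≫ N.d i (i + 1) = 0)
    (hH : π • 𝟙 (N.homology i) = 0) :
    ∃ s : P ⟶ N.X (i - 1), s ≫ N.d (i - 1) i = π • g := by
  have hnext : (ComplexShape.up ℤ).next i = i + 1 := by simp
  have hprev : (ComplexShape.up ℤ).prev i = i - 1 := by simp
  set φ := N.liftCycles g (i + 1) hnext hg with hφdef
  set S := ShortComplex.mk (N.toCycles (i - 1) i) (N.homologyπ i)
    (N.toCycles_comp_homologyπ (i - 1) i) with hSdef
  have hS : S.Exact := S.exact_of_g_is_cokernel (N.homologyIsCokernel (i - 1) i hprev)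
  have hπ0 : π • N.homologyπ i = 0 := by
    rw [← Category.comp_id (N.homologyπ i), ← Linear.comp_smul, hH, comp_zero]
  have hφ : (π • φ) ≫ S.g = 0 := by
    show (π • φ) ≫ N.homologyπ i = 0
    rw [Linear.smul_comp, ← Linear.comp_smul, hπ0, comp_zero]
  refine ⟨hS.liftFromProjective (π • φ) hφ, ?_⟩
  have h1 : hS.liftFromProjective (π • φ) hφ ≫ N.toCycles (i - 1) i = π • φ :=
    hS.liftFromProjective_comp (π • φ) hφ
  have h2 := congrArg (· ≫ N.iCycles i) h1
  simpa [Category.assoc, Linear.smul_comp, hφdef] using h2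

/-- **Lemma 3.3.** Let `𝒜` be an abelian category equipped with a ring homomorphism
`R → End(id_𝒜)` (e.g. an `R`-linear abelian category, where `π ∈ R` acts on each object `X`
as `π • 𝟙 X`), and let `f : M^• ⟶ N^•` be a morphism of cochain complexes in `𝒜` such that
`M^i = N^i = 0` for `i > 0`, and such that for some `n ∈ ℕ`, for all `-n ≤ i ≤ 0`, `M^i` is
projective and `π • H^i(N^•) = 0`. Then there exist `s^i : M^i ⟶ N^{i-1}` for all `i`
(with `s^1 = 0`) such that for all `-n ≤ i ≤ 0`,
`π^{1-i} • f^i = π • (s^{i+1} ∘ d^i) + d^{i-1} ∘ s^i`; in particular (eq. (3.3.4)), for all such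
`i`, `π^{n+1} • f^i = (π^{n+i+1} • s^{i+1}) ∘ d^i + d^{i-1} ∘ (π^{n+i} • s^i)`, i.e. `π^{n+1} • f`
is null-homotopic in degrees `≥ -n`. -/
theorem pi_exact_homotopy {R : Type*} [CommRing R] {A : Type*} [Category A] [Abelian A]
    [CategoryTheory.Linear R A] (π : R) {M N : CochainComplex A ℤ} (f : M ⟶ N) (n : ℕ)
    (hM : ∀ i : ℤ, 0 < i → IsZero (M.X i)) (hN : ∀ i : ℤ, 0 < i → IsZero (N.X i))
    (hproj : ∀ i : ℤ, -(n : ℤ) ≤ i → i ≤ 0 → Projective (M.X i))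
    (hH : ∀ i : ℤ, -(n : ℤ) ≤ i → i ≤ 0 → π • 𝟙 (N.homology i) = 0) :
    ∃ s : ∀ i : ℤ, M.X i ⟶ N.X (i - 1), s 1 = 0 ∧
      ∀ i : ℤ, -(n : ℤ) ≤ i → i ≤ 0 →
        (π ^ (1 - i).toNat • f.f i =
          π • (M.d i (i + 1) ≫ s (i + 1) ≫ eqToHom (by rw [show i + 1 - 1 = i by omega])) +
            s i ≫ N.d (i - 1) i) ∧
        (π ^ (n + 1) • f.f i =
          π ^ (n + i + 1).toNat •
              (M.d i (i + 1) ≫ s (i + 1) ≫ eqToHom (by rw [show i + 1 - 1 = i by omega])) +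
            π ^ (n + i).toNat • (s i ≫ N.d (i - 1) i)) := by
  have main : ∀ k : ℕ, k ≤ n + 1 → ∃ s : ∀ i : ℤ, M.X i ⟶ N.X (i - 1), s 1 = 0 ∧
      ∀ i : ℤ, 1 - (k : ℤ) ≤ i → i ≤ 0 →
        π ^ (1 - i).toNat • f.f i =
          π • (M.d i (i + 1) ≫ s (i + 1) ≫ eqToHom (by rw [show i + 1 - 1 = i by omega])) +
            s i ≫ N.d (i - 1) i := by
    intro k
    induction k with
    | zero =>
      exact fun _ => ⟨fun _ => 0, rfl, fun i h1 h2 => absurd (h1.trans h2) (by norm_num)⟩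
    | succ k ih =>
      intro hk
      obtain ⟨s, hs1, hs⟩ := ih (by omega)
      have hproj0 : Projective (M.X (-(k : ℤ))) := hproj _ (by omega) (by omega)
      set i0 : ℤ := -(k : ℤ) with hi0
      set g : M.X i0 ⟶ N.X i0 := π ^ k • f.f i0 -
        M.d i0 (i0 + 1) ≫ s (i0 + 1) ≫ eqToHom (by rw [show i0 + 1 - 1 = i0 by omega])
        with hgdef
      have hg : g ≫ N.d i0 (i0 + 1) = 0 := by
        rcases Nat.eq_zero_or_pos k with hk0 | hk0
        · subst hk0
          have : N.d i0 (i0 + 1) = 0 := (hN (i0 + 1) (by omega)).eq_of_tgt _ _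
          rw [this, comp_zero]
        · have h1 := hs (i0 + 1) (by omega) (by omega)
          have htn : (1 - (i0 + 1)).toNat = k := by omega
          rw [htn] at h1
          have he : (eqToHom (by rw [show i0 + 1 - 1 = i0 by omega] :
              N.X (i0 + 1 - 1) = N.X i0)) ≫ N.d i0 (i0 + 1) = N.d (i0 + 1 - 1) (i0 + 1) :=
            pi_exact_homotopy_eqToHom_d N (by omega) _
          rw [hgdef, Preadditive.sub_comp, Linear.smul_comp, f.comm i0 (i0 + 1),
            Category.assoc, Category.assoc, he, ← Linear.comp_smul, h1]
          simp [Preadditive.comp_add, Linear.comp_smul, ← Category.assoc,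
            M.d_comp_d, Linear.smul_comp]
      obtain ⟨t, ht⟩ := pi_exact_homotopy_key π N i0 g hg (hH i0 (by omega) (by omega))
      refine ⟨fun i => if h : i = i0 then
        eqToHom (by rw [h]) ≫ t ≫ eqToHom (by rw [h]) else s i, ?_, ?_⟩
      · beta_reduce
        rw [dif_neg (show (1:ℤ) ≠ i0 by omega), hs1]
      · intro i hi1 hi2
        have hne : i + 1 ≠ i0 := by omega
        beta_reduce
        rw [dif_neg hne]
        by_cases hii : i = i0
        · subst hii
          rw [dif_pos rfl]
          simp only [eqToHom_refl, Category.comp_id, Category.id_comp]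
          have htn : (1 - i0).toNat = k + 1 := by omega
          rw [htn, ht, hgdef, smul_sub, smul_smul, ← pow_succ']
          abel
        · rw [dif_neg hii]
          exact hs i (by omega) hi2
  obtain ⟨s, hs1, hs⟩ := main (n + 1) le_rfl
  refine ⟨s, hs1, fun i h1 h2 => ?_⟩
  have eq1 := hs i (by omega) h2
  refine ⟨eq1, ?_⟩
  have hpow : π ^ (n + 1) = π ^ (n + i).toNat * π ^ (1 - i).toNat := by
    rw [← pow_add]
    congr 1
    omega
  rw [hpow, mul_smul, eq1, smul_add, smul_smul, ← pow_succ,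
    show (n + i).toNat + 1 = (n + i + 1).toNat by omega]
end

section
/- Let 𝒜 be an abelian category equipped with a ring homomorphism R → End(id_𝒜), π ∈ R, and let a ≤ b be integers. Let P^• be a cochain complex of projective objects of 𝒜 and M^• a π-exact cochain complex in 𝒜, and assume P^i = 0 and M^i = 0 for all i ∉ [a,b]. Then the R-module Hom_{K(𝒜)}(P^•, M^•) of homotopy classes of morphisms of complexes is annihilated by π^{b−a+1}. -/
open CategoryTheory CategoryTheory.Limits

section Aux

variable {R : Type*} [CommRing R] {A : Type*} [Category A] [Abelian A]
  [CategoryTheory.Linear R A]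

/-- Key lifting lemma: if `π` kills `H^n(M)`, any map from a projective object to `M.X n`
landing in cycles becomes, after multiplication by `π`, a boundary. -/
lemma key_lift (π : R) (M : CochainComplex A ℤ) (n : ℤ)
    (hM : π • 𝟙 (M.homology n) = 0) {Q : A} [Projective Q]
    (g : Q ⟶ M.X n) (hg : g ≫ M.d n (n + 1) = 0) :
    ∃ w : Q ⟶ M.X (n - 1), w ≫ M.d (n - 1) n = π • g := by
  have hnext : (ComplexShape.up ℤ).next n = n + 1 := by simp
  have hprev : (ComplexShape.up ℤ).prev n = n - 1 := by simp
  let S : ShortComplex A := ShortComplex.mk (M.toCycles (n - 1) n) (M.homologyπ n)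
    (M.toCycles_comp_homologyπ (n - 1) n)
  have hS : S.Exact := S.exact_of_g_is_cokernel (M.homologyIsCokernel (n - 1) n hprev)
  set u : Q ⟶ M.cycles n := M.liftCycles g (n + 1) hnext hg with hu_def
  have hu : (π • u) ≫ S.g = 0 := by
    show (π • u) ≫ M.homologyπ n = 0
    rw [Linear.smul_comp, ← Category.comp_id (u ≫ M.homologyπ n), ← Linear.comp_smul,
      Category.assoc, hM]
    simp
  refine ⟨hS.liftFromProjective (π • u) hu, ?_⟩
  have h1 : hS.liftFromProjective (π • u) hu ≫ M.toCycles (n - 1) n = π • u :=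
    hS.liftFromProjective_comp (π • u) hu
  have h2 := congrArg (· ≫ M.iCycles n) h1
  simpa [hu_def, Linear.smul_comp] using h2

/-- Inductive construction of the homotopy, from the top degree `b` downwards. -/
lemma aux_homotopy (π : R) {P M : CochainComplex A ℤ} (hP : ∀ i : ℤ, Projective (P.X i))
    (b : ℤ) (hMz : ∀ i : ℤ, b < i → IsZero (M.X i))
    (hM : ∀ n : ℤ, π • 𝟙 (M.homology n) = 0) (f : P ⟶ M) (k : ℕ) :
    ∃ h : ∀ i j : ℤ, P.X i ⟶ M.X j,
      (∀ i j : ℤ, j + 1 ≠ i → h i j = 0) ∧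
      ∀ i : ℤ, b - k ≤ i →
        π ^ (k + 1) • f.f i = P.d i (i + 1) ≫ h (i + 1) i + h i (i - 1) ≫ M.d (i - 1) i := by
  have hftop : ∀ i : ℤ, b < i → f.f i = 0 := fun i hi => (hMz i hi).eq_of_tgt _ _
  induction k with
  | zero =>
      have hg : f.f b ≫ M.d b (b + 1) = 0 := (hMz (b + 1) (by omega)).eq_of_tgt _ _
      haveI := hP b
      obtain ⟨w, hw⟩ := key_lift π M b (hM b) (f.f b) hg
      refine ⟨fun i j => if hij : i = b ∧ j = b - 1 then
          eqToHom (by rw [hij.1]) ≫ w ≫ eqToHom (by rw [hij.2]) else 0, ?_, ?_⟩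
      · intro i j hij
        dsimp only
        rw [dif_neg]
        rintro ⟨rfl, rfl⟩
        omega
      · intro i hi
        have hi' : b ≤ i := by simpa using hi
        rcases lt_or_eq_of_le hi' with hlt | heq
        · dsimp only
          rw [hftop i hlt]
          rw [dif_neg (by rintro ⟨rfl, -⟩; omega), dif_neg (by rintro ⟨rfl, -⟩; omega)]
          simp
        · subst heq
          dsimp only
          rw [dif_neg (by rintro ⟨h1, -⟩; omega), dif_pos ⟨rfl, rfl⟩]
          simp [hw]
  | succ k ih =>
      obtain ⟨h, hdiag, heq⟩ := ih
      set n : ℤ := b - (k + 1 : ℕ) with hn_def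
      have hn : n = b - k - 1 := by push_cast [hn_def]; ring
      -- the defect map in degree `n`
      set g : P.X n ⟶ M.X n := π ^ (k + 1) • f.f n - P.d n (n + 1) ≫ h (n + 1) n with hg_def
      have heq' : π ^ (k + 1) • f.f (n + 1) =
          P.d (n + 1) (n + 2) ≫ h (n + 2) (n + 1) + h (n + 1) n ≫ M.d n (n + 1) := by
        have h2 := heq (n + 1) (by omega)
        rw [show n + 1 - 1 = n from by ring, show n + 1 + 1 = n + 2 from by ring] at h2
        exact h2
      have hg : g ≫ M.d n (n + 1) = 0 := by
        have hcomm : f.f n ≫ M.d n (n + 1) = P.d n (n + 1) ≫ f.f (n + 1) := f.comm n (n + 1)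
        have hdd : P.d n (n + 1) ≫ P.d (n + 1) (n + 2) = 0 := P.d_comp_d n (n + 1) (n + 2)
        have hrepl : h (n + 1) n ≫ M.d n (n + 1) =
            π ^ (k + 1) • f.f (n + 1) - P.d (n + 1) (n + 2) ≫ h (n + 2) (n + 1) := by
          rw [heq']; abel
        rw [hg_def, Preadditive.sub_comp, Linear.smul_comp, hcomm, Category.assoc, hrepl,
          Preadditive.comp_sub, Linear.comp_smul, ← Category.assoc, hdd, zero_comp, sub_zero,
          sub_self]
      haveI := hP n
      obtain ⟨w, hw⟩ := key_lift π M n (hM n) g hg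
      refine ⟨fun i j => if hij : i = n ∧ j = n - 1 then
          eqToHom (by rw [hij.1]) ≫ w ≫ eqToHom (by rw [hij.2]) else π • h i j, ?_, ?_⟩
      · intro i j hij
        dsimp only
        rw [dif_neg (by rintro ⟨rfl, rfl⟩; omega), hdiag i j hij, smul_zero]
      · intro i hi
        have hi' : n ≤ i := by omega
        rcases lt_or_eq_of_le hi' with hlt | heqn
        · -- i > n : multiply the previous equation by π
          dsimp only
          rw [dif_neg (by rintro ⟨h1, -⟩; omega), dif_neg (by rintro ⟨h1, -⟩; omega)]
          have := heq i (by omega)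
          calc π ^ (k + 1 + 1) • f.f i = π • (π ^ (k + 1) • f.f i) := by
                rw [smul_smul, ← pow_succ']
            _ = π • (P.d i (i + 1) ≫ h (i + 1) i + h i (i - 1) ≫ M.d (i - 1) i) := by rw [this]
            _ = P.d i (i + 1) ≫ (π • h (i + 1) i) + (π • h i (i - 1)) ≫ M.d (i - 1) i := by
                rw [smul_add, Linear.comp_smul, Linear.smul_comp]
        · -- i = n
          subst heqn
          dsimp only
          rw [dif_neg (by rintro ⟨h1, -⟩; omega), dif_pos ⟨rfl, rfl⟩]
          simp only [eqToHom_refl, Category.comp_id, Category.id_comp]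
          rw [hw, hg_def]
          rw [smul_sub, ← Linear.comp_smul]
          calc π ^ (k + 1 + 1) • f.f n = π • (π ^ (k + 1) • f.f n) := by
                rw [smul_smul, ← pow_succ']
            _ = P.d n (n + 1) ≫ (π • h (n + 1) n) +
                (π • (π ^ (k + 1) • f.f n) - P.d n (n + 1) ≫ (π • h (n + 1) n)) := by abel

end Aux

/-- **Proposition 3.4.** Let `𝒜` be an abelian category equipped with a ring homomorphism
`R → End(id_𝒜)` (e.g. an `R`-linear abelian category, where `π ∈ R` acts on each object `X` as
`π • 𝟙 X`), `a ≤ b` integers, `P^•` a cochain complex of projective objects and `M^•` a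
`π`-exact cochain complex (i.e. `π • H^n(M^•) = 0` for all `n`), both vanishing in degrees
outside `[a, b]`. Then the `R`-module `Hom_{K(𝒜)}(P^•, M^•)` is annihilated by `π^{b-a+1}`. -/
theorem hom_homotopyCategory_pi_null {R : Type*} [CommRing R] {A : Type*} [Category A]
    [Abelian A] [CategoryTheory.Linear R A] (π : R) (a b : ℤ) (hab : a ≤ b)
    {P M : CochainComplex A ℤ}
    (hP : ∀ i : ℤ, Projective (P.X i))
    (hPz : ∀ i : ℤ, i < a ∨ b < i → IsZero (P.X i))
    (hMz : ∀ i : ℤ, i < a ∨ b < i → IsZero (M.X i))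
    (hM : ∀ n : ℤ, π • 𝟙 (M.homology n) = 0) :
    ∀ φ : (HomotopyCategory.quotient A (ComplexShape.up ℤ)).obj P ⟶
        (HomotopyCategory.quotient A (ComplexShape.up ℤ)).obj M,
      π ^ (b - a + 1).toNat • φ = 0 := by
  intro φ
  obtain ⟨f, rfl⟩ := (HomotopyCategory.quotient A (ComplexShape.up ℤ)).map_surjective φ
  set k : ℕ := (b - a).toNat with hk_def
  have hN : (b - a + 1).toNat = k + 1 := by omega
  have hbk : b - (k : ℤ) = a := by omega
  obtain ⟨h, hdiag, heq⟩ := aux_homotopy π hP b (fun i hi => hMz i (Or.inr hi)) hM f k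
  have hhom : Homotopy (π ^ (k + 1) • f) 0 := by
    refine ⟨h, fun i j hij => hdiag i j (by simpa using hij), fun i => ?_⟩
    have hdN : dNext i h = P.d i (i + 1) ≫ h (i + 1) i :=
      dNext_eq h (by simp : (ComplexShape.up ℤ).Rel i (i + 1))
    have hpD : prevD i h = h i (i - 1) ≫ M.d (i - 1) i :=
      prevD_eq h (by simp : (ComplexShape.up ℤ).Rel (i - 1) i)
    rcases le_or_gt a i with hi | hi
    · have := heq i (by omega)
      simp only [HomologicalComplex.zero_f_apply, add_zero, hdN, hpD]
      simpa using this
    · exact (hPz i (Or.inl hi)).eq_of_src _ _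
  have := HomotopyCategory.eq_of_homotopy _ _ hhom
  rw [Functor.map_smul, Functor.map_zero] at this
  rw [hN]
  exact this
end

section
/- Let 𝒜 be an abelian category equipped with a ring homomorphism R → End(id_𝒜), π ∈ R, and let a ≤ b be integers. Let P^• be a complex of projective objects of 𝒜 and let f : M^• → N^• be a π-quasi-isomorphism of cochain complexes in 𝒜, and assume P^i, M^i and N^i vanish for all i ∉ [a,b]. Then the map Hom_{K(𝒜)}(P^•, M^•) → Hom_{K(𝒜)}(P^•, N^•) induced by composition with f is a π^{2(b−a+3)}-isomorphism of R-modules. -/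
/-!
The long exact homology sequence of the triangle `M → N → cone f → M⟦1⟧` shows that `π²` kills
every cohomology object of the mapping cone. If `r` kills the cohomology of a complex `C`, a chain
map `u : P ⟶ C` out of a complex of projectives vanishing below degree `a` can be pushed down one
degree at a time: the top nonzero component of `r • u` lifts through the differential of `C`, and
subtracting the resulting null-homotopic map lowers the top degree. After `b + 1 - a` steps
nothing is left, so `(π²)^(b+1-a)` kills `Hom_K(P, cone f)` and `Hom_K(P, (cone f)⟦-1⟧)`, and the
exact sequences `Hom_K(P, (cone f)⟦-1⟧) → Hom_K(P, M) → Hom_K(P, N) → Hom_K(P, cone f)` give the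
claim.
-/

open CategoryTheory CategoryTheory.Limits HomotopyCategory Pretriangulated

section SmulId

variable {R : Type*} [Semiring R] {C : Type*} [Category C] [Preadditive C]
  [CategoryTheory.Linear R C] {r s : R}

lemma smul_id_eq_zero_of_iso {X Y : C} (e : X ≅ Y) (h : r • 𝟙 X = 0) : r • 𝟙 Y = 0 :=
  calc r • 𝟙 Y = e.inv ≫ (r • 𝟙 X) ≫ e.hom := by simp
    _ = 0 := by rw [h, zero_comp, comp_zero]

lemma smul_eq_zero_of_comp_eq_zero_of_smul_id_cokernel {X Y Z : C} {φ : X ⟶ Y} [HasCokernel φ]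
    {g : Y ⟶ Z} (hφg : φ ≫ g = 0) (h : r • 𝟙 (cokernel φ) = 0) : r • g = 0 :=
  calc r • g = cokernel.π φ ≫ (r • 𝟙 _) ≫ cokernel.desc φ g hφg := by simp
    _ = 0 := by rw [h, zero_comp, comp_zero]

lemma smul_eq_zero_of_comp_eq_zero_of_smul_id_kernel {X Y Z : C} {g : X ⟶ Y} {ψ : Y ⟶ Z}
    [HasKernel ψ] (hgψ : g ≫ ψ = 0) (h : r • 𝟙 (kernel ψ) = 0) : r • g = 0 :=
  calc r • g = kernel.lift ψ g hgψ ≫ (r • 𝟙 _) ≫ kernel.ι ψ := by simp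
    _ = 0 := by rw [h, zero_comp, comp_zero]

/-- `s • 𝟙` factors through the cycles, which `r` kills because exactness makes them a quotient
of `S.X₁`. -/
lemma CategoryTheory.ShortComplex.Exact.mul_smul_id_eq_zero {S : ShortComplex C}
    [S.HasLeftHomology] (hS : S.Exact) (hf : r • S.f = 0) (hg : s • S.g = 0) :
    (r * s) • 𝟙 S.X₂ = 0 := by
  have := hS.epi_toCycles
  have hi : r • S.iCycles = 0 := by
    rw [← cancel_epi S.toCycles, comp_zero, Linear.comp_smul, S.toCycles_i, hf]
  have hs : (s • 𝟙 S.X₂) ≫ S.g = 0 := by rw [Linear.smul_comp, Category.id_comp, hg]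
  rw [mul_smul, ← S.liftCycles_i _ hs, ← Linear.comp_smul, hi, comp_zero]

end SmulId

section Homological

variable {R : Type*} [Semiring R] {C : Type*} [Category C] [HasZeroObject C] [HasShift C ℤ]
  [Preadditive C] [∀ n : ℤ, (shiftFunctor C n).Additive] [Pretriangulated C]
  {A : Type*} [Category A] [Abelian A] [CategoryTheory.Linear R A]

lemma mul_smul_id_shift_obj_obj₃_eq_zero (F : C ⥤ A) [F.IsHomological]
    [F.ShiftSequence ℤ] (T : Triangle C) (hT : T ∈ distTriang C) (n₀ n₁ : ℤ) (h : n₀ + 1 = n₁)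
    {r s : R} (hr : r • 𝟙 (cokernel ((F.shift n₀).map T.mor₁)) = 0)
    (hs : s • 𝟙 (kernel ((F.shift n₁).map T.mor₁)) = 0) :
    (r * s) • 𝟙 ((F.shift n₀).obj T.obj₃) = 0 :=
  (F.homologySequence_exact₃ T hT n₀ n₁ h).mul_smul_id_eq_zero
    (smul_eq_zero_of_comp_eq_zero_of_smul_id_cokernel (F.homologySequence_comp T hT n₀) hr)
    (smul_eq_zero_of_comp_eq_zero_of_smul_id_kernel (F.homologySequenceδ_comp T hT n₀ n₁ h) hs)

end Homological

section Complexes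

variable {R : Type*} [Semiring R] {A : Type*} [Category A] [Abelian A]
  [CategoryTheory.Linear R A] {r s : R}

lemma homologyFunctor_mappingCone_mul_smul_id_eq_zero {M N : CochainComplex A ℤ} (f : M ⟶ N)
    (hcoker : ∀ n, r • 𝟙 (cokernel (HomologicalComplex.homologyMap f n)) = 0)
    (hker : ∀ n, s • 𝟙 (kernel (HomologicalComplex.homologyMap f n)) = 0) (n : ℤ) :
    (r * s) • 𝟙 ((homologyFunctor A (ComplexShape.up ℤ) n).obj
      ((quotient A (ComplexShape.up ℤ)).obj (CochainComplex.mappingCone f))) = 0 := by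
  have hsq (k : ℤ) := (homologyFunctorFactors A (ComplexShape.up ℤ) k).hom.naturality f
  exact mul_smul_id_shift_obj_obj₃_eq_zero (homologyFunctor A (ComplexShape.up ℤ) 0) _
    (mappingCone_triangleh_distinguished f) n (n + 1) rfl
    (smul_id_eq_zero_of_iso (cokernel.mapIso _ _ ((homologyFunctorFactors A _ n).app M)
      ((homologyFunctorFactors A _ n).app N) (hsq n)).symm (hcoker n))
    (smul_id_eq_zero_of_iso (kernel.mapIso _ _ ((homologyFunctorFactors A _ (n + 1)).app M)
      ((homologyFunctorFactors A _ (n + 1)).app N) (hsq (n + 1))).symm (hker (n + 1)))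

lemma homologyFunctor_shift_smul_id_eq_zero {K : HomotopyCategory A (ComplexShape.up ℤ)}
    (hK : ∀ n, r • 𝟙 ((homologyFunctor A (ComplexShape.up ℤ) n).obj K) = 0) (a n : ℤ) :
    r • 𝟙 ((homologyFunctor A (ComplexShape.up ℤ) n).obj (K⟦a⟧)) = 0 :=
  smul_id_eq_zero_of_iso
    (((homologyFunctor A (ComplexShape.up ℤ) 0).shiftIso a n (a + n) rfl).app K).symm
    (hK (a + n))

lemma exists_comp_d_eq_smul_of_projective {C : CochainComplex A ℤ} {X : A} [Projective X]
    {j : ℤ} (hC : r • 𝟙 (C.homology j) = 0) (g : X ⟶ C.X j) (hg : g ≫ C.d j (j + 1) = 0) :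
    ∃ t : X ⟶ C.X (j - 1), t ≫ C.d (j - 1) j = r • g := by
  let z := C.liftCycles g (j + 1) (by simp) hg
  have hz : (r • z) ≫ C.homologyπ j = 0 := by
    rw [Linear.smul_comp, ← Linear.comp_smul, ← Category.comp_id (C.homologyπ j),
      ← Linear.comp_smul, hC, comp_zero, comp_zero]
  have hex : (ShortComplex.mk _ _ (C.toCycles_comp_homologyπ (j - 1) j)).Exact :=
    ShortComplex.exact_of_g_is_cokernel _ (C.homologyIsCokernel (j - 1) j (by simp))
  refine ⟨hex.liftFromProjective (r • z) hz, ?_⟩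
  rw [← C.toCycles_i, ← Category.assoc, hex.liftFromProjective_comp, Linear.smul_comp,
    C.liftCycles_i]

lemma exists_quotient_map_eq_smul_of_vanishing {P C : CochainComplex A ℤ} {j : ℤ}
    [Projective (P.X j)] (hC : r • 𝟙 (C.homology j) = 0) (u : P ⟶ C)
    (hu : ∀ i, j < i → u.f i = 0) :
    ∃ w : P ⟶ C, (quotient A (ComplexShape.up ℤ)).map w =
      r • (quotient A (ComplexShape.up ℤ)).map u ∧ ∀ i, j ≤ i → w.f i = 0 := by
  obtain ⟨t, ht⟩ := exists_comp_d_eq_smul_of_projective hC (u.f j)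
    (by rw [u.comm, hu (j + 1) (by omega), comp_zero])
  -- `w := r • u - (d t + t d)`, with `t` placed in degree `j`
  let h (i k : ℤ) (hki : (ComplexShape.up ℤ).Rel k i) : P.X i ⟶ C.X k :=
    if hi : i = j then
      (P.XIsoOfEq hi).hom ≫ t ≫ (C.XIsoOfEq (show j - 1 = k by simp at hki; omega)).hom
    else 0
  refine ⟨r • u - Homotopy.nullHomotopicMap' h, ?_, fun i hi => ?_⟩
  · rw [Functor.map_sub, Functor.map_smul, eq_of_homotopy _ _ (Homotopy.nullHomotopy' h),
      Functor.map_zero, sub_zero]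
  · rw [HomologicalComplex.sub_f_apply, HomologicalComplex.smul_f_apply,
      Homotopy.nullHomotopicMap'_f (k₂ := i - 1) (k₀ := i + 1) (by simp) (by simp)]
    obtain rfl | hij := eq_or_ne i j
    · simp [h, ht]
    · simp [h, hij, hu i (by omega), show i + 1 ≠ j by omega]

lemma pow_smul_quotient_map_eq_zero_of_vanishing {P C : CochainComplex A ℤ}
    (hP : ∀ i, Projective (P.X i)) {c : ℤ} (hPz : ∀ i, i < c → IsZero (P.X i))
    (hC : ∀ n, r • 𝟙 (C.homology n) = 0) (m : ℕ) (u : P ⟶ C)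
    (hu : ∀ i, c + m ≤ i → u.f i = 0) :
    r ^ m • (quotient A (ComplexShape.up ℤ)).map u = 0 := by
  induction m generalizing u with
  | zero =>
    have hu0 : u = 0 := by
      ext i
      by_cases hi : i < c
      · exact (hPz i hi).eq_of_src _ _
      · exact hu i (by omega)
    simp [hu0]
  | succ m ih =>
    have := hP (c + m)
    obtain ⟨w, hw, hw0⟩ := exists_quotient_map_eq_smul_of_vanishing (hC (c + m)) u
      (fun i hi => hu i (by push_cast; omega))
    rw [pow_succ, mul_smul, ← hw, ih w hw0]

lemma pow_smul_eq_zero_of_homology_smul_id_eq_zero {P : CochainComplex A ℤ}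
    (hP : ∀ i, Projective (P.X i)) {a b : ℤ} (hPz : ∀ i, i < a ∨ b < i → IsZero (P.X i))
    {K : HomotopyCategory A (ComplexShape.up ℤ)}
    (hK : ∀ n, r • 𝟙 ((homologyFunctor A (ComplexShape.up ℤ) n).obj K) = 0)
    (x : (quotient A (ComplexShape.up ℤ)).obj P ⟶ K) : r ^ (b + 1 - a).toNat • x = 0 := by
  obtain ⟨C, rfl⟩ := quotient_obj_surjective K
  obtain ⟨u, rfl⟩ := (quotient A (ComplexShape.up ℤ)).map_surjective x
  exact pow_smul_quotient_map_eq_zero_of_vanishing hP (fun i hi => hPz i (.inl hi))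
    (fun n => smul_id_eq_zero_of_iso ((homologyFunctorFactors A _ n).app C) (hK n)) _ u
    (fun i hi => (hPz i (.inr (by omega))).eq_of_src _ _)

end Complexes

theorem hom_homotopyCategory_pi_iso_general {R : Type*} [CommRing R] {A : Type*} [Category A]
    [Abelian A] [CategoryTheory.Linear R A] (π : R) (a b : ℤ)
    {P M N : CochainComplex A ℤ} (f : M ⟶ N)
    (hP : ∀ i : ℤ, Projective (P.X i))
    (hPz : ∀ i : ℤ, i < a ∨ b < i → IsZero (P.X i))
    (hf : ∀ n : ℤ, π • 𝟙 (kernel (HomologicalComplex.homologyMap f n)) = 0 ∧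
      π • 𝟙 (cokernel (HomologicalComplex.homologyMap f n)) = 0) :
    (∀ x : (HomotopyCategory.quotient A (ComplexShape.up ℤ)).obj P ⟶
        (HomotopyCategory.quotient A (ComplexShape.up ℤ)).obj M,
      x ≫ (HomotopyCategory.quotient A (ComplexShape.up ℤ)).map f = 0 →
        π ^ (2 * (b - a + 3)).toNat • x = 0) ∧
    (∀ y : (HomotopyCategory.quotient A (ComplexShape.up ℤ)).obj P ⟶
        (HomotopyCategory.quotient A (ComplexShape.up ℤ)).obj N,
      ∃ x : (HomotopyCategory.quotient A (ComplexShape.up ℤ)).obj P ⟶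
          (HomotopyCategory.quotient A (ComplexShape.up ℤ)).obj M,
        π ^ (2 * (b - a + 3)).toNat • y =
          x ≫ (HomotopyCategory.quotient A (ComplexShape.up ℤ)).map f) := by
  let T := CochainComplex.mappingCone.triangleh f
  have hT : T ∈ distTriang _ := mappingCone_triangleh_distinguished f
  have hcone := homologyFunctor_mappingCone_mul_smul_id_eq_zero f
    (fun n => (hf n).2) (fun n => (hf n).1)
  have annihilates {K : HomotopyCategory A (ComplexShape.up ℤ)}
      (hK : ∀ n, (π * π) • 𝟙 ((homologyFunctor A (ComplexShape.up ℤ) n).obj K) = 0)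
      (x : (quotient A (ComplexShape.up ℤ)).obj P ⟶ K) :
      π ^ (2 * (b - a + 3)).toNat • x = 0 := by
    have hle : 2 * (b + 1 - a).toNat ≤ (2 * (b - a + 3)).toNat := by omega
    rw [← Nat.sub_add_cancel hle, pow_add, mul_smul, pow_mul, sq,
      pow_smul_eq_zero_of_homology_smul_id_eq_zero hP hPz hK x, smul_zero]
  refine ⟨fun x hx => ?_, fun y => ?_⟩
  · obtain ⟨y, rfl⟩ := Triangle.coyoneda_exact₂ _ (inv_rot_of_distTriang T hT) x hx
    exact (Linear.smul_comp _ _ _ _ _ _).symm.trans ((congrArg (· ≫ T.invRotate.mor₁)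
      (annihilates (homologyFunctor_shift_smul_id_eq_zero hcone (-1)) y)).trans zero_comp)
  · exact Triangle.coyoneda_exact₂ T hT _
      ((Linear.smul_comp _ _ _ _ _ _).trans (annihilates hcone _))

/-- **Corollary 3.5.** Let `𝒜` be an abelian category equipped with a ring homomorphism
`R → End(id_𝒜)` (e.g. an `R`-linear abelian category, where `π ∈ R` acts on each object `X` as
`π • 𝟙 X`), `a ≤ b` integers, `P^•` a complex of projective objects and `f : M^• ⟶ N^•` a
`π`-quasi-isomorphism (i.e. each `H^n(f)` has `π`-null kernel and cokernel), with `P^i`, `M^i`,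
`N^i` vanishing for `i ∉ [a, b]`. Then the map
`Hom_{K(𝒜)}(P^•, M^•) → Hom_{K(𝒜)}(P^•, N^•)` induced by `f` is a `π^{2(b-a+3)}`-isomorphism of
`R`-modules: its kernel and cokernel are annihilated by `π^{2(b-a+3)}`. -/
theorem hom_homotopyCategory_pi_iso {R : Type*} [CommRing R] {A : Type*} [Category A]
    [Abelian A] [CategoryTheory.Linear R A] (π : R) (a b : ℤ) (hab : a ≤ b)
    {P M N : CochainComplex A ℤ} (f : M ⟶ N)
    (hP : ∀ i : ℤ, Projective (P.X i))
    (hPz : ∀ i : ℤ, i < a ∨ b < i → IsZero (P.X i))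
    (hMz : ∀ i : ℤ, i < a ∨ b < i → IsZero (M.X i))
    (hNz : ∀ i : ℤ, i < a ∨ b < i → IsZero (N.X i))
    (hf : ∀ n : ℤ, π • 𝟙 (kernel (HomologicalComplex.homologyMap f n)) = 0 ∧
      π • 𝟙 (cokernel (HomologicalComplex.homologyMap f n)) = 0) :
    (∀ x : (HomotopyCategory.quotient A (ComplexShape.up ℤ)).obj P ⟶
        (HomotopyCategory.quotient A (ComplexShape.up ℤ)).obj M,
      x ≫ (HomotopyCategory.quotient A (ComplexShape.up ℤ)).map f = 0 →
        π ^ (2 * (b - a + 3)).toNat • x = 0) ∧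
    (∀ y : (HomotopyCategory.quotient A (ComplexShape.up ℤ)).obj P ⟶
        (HomotopyCategory.quotient A (ComplexShape.up ℤ)).obj N,
      ∃ x : (HomotopyCategory.quotient A (ComplexShape.up ℤ)).obj P ⟶
          (HomotopyCategory.quotient A (ComplexShape.up ℤ)).obj M,
        π ^ (2 * (b - a + 3)).toNat • y =
          x ≫ (HomotopyCategory.quotient A (ComplexShape.up ℤ)).map f) :=
  hom_homotopyCategory_pi_iso_general π a b f hP hPz hf
end

section
/- Let 𝒜 be an abelian category equipped with a ring homomorphism R → End(id_𝒜), π ∈ R, and let a ≤ b be integers. Let g : P^• → N^• and f : M^• → N^• be morphisms of cochain complexes in 𝒜 such that: (i) M^i = N^i = 0 for all i > b; (ii) P^i is projective for all i ∈ [a,b] and P^i = 0 for all i ∉ [a,b]; (iii) H^i(f) : H^i(M^•) → H^i(N^•) is a π-isomorphism for all i > a and π-surjective for i = a. Then there exists a morphism of complexes h : P^• → M^• such that f∘h is homotopic to π^{2(b−a+1)}·g. -/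
open CategoryTheory CategoryTheory.Limits
open HomologicalComplex

section Aux


variable {A : Type*} [Category A] [Abelian A]

lemma lift_of_cokernel_comp_zero {X Y Q : A} [Projective Q] (t : X ⟶ Y) (c : Q ⟶ Y)
    (hc : c ≫ cokernel.π t = 0) : ∃ w : Q ⟶ X, w ≫ t = c := by
  refine ⟨Projective.factorThru (kernel.lift (cokernel.π t) c hc) (Abelian.factorThruImage t), ?_⟩
  have h1 : Projective.factorThru (kernel.lift (cokernel.π t) c hc) (Abelian.factorThruImage t) ≫
      (Abelian.factorThruImage t ≫ Abelian.image.ι t) = c := by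
    rw [← Category.assoc, Projective.factorThru_comp, kernel.lift_ι]
  simpa only [Abelian.image.fac] using h1

lemma lift_of_isColimit_comp_zero {X Y Z Q : A} [Projective Q] (t : X ⟶ Y) {p : Y ⟶ Z}
    {hp : t ≫ p = 0} (hcolim : IsColimit (CokernelCofork.ofπ p hp)) (c : Q ⟶ Y)
    (hc : c ≫ p = 0) : ∃ w : Q ⟶ X, w ≫ t = c := by
  obtain ⟨d, hd⟩ := CokernelCofork.IsColimit.desc' hcolim (cokernel.π t) (cokernel.condition t)
  refine lift_of_cokernel_comp_zero t c ?_
  simp only [Cofork.π_ofπ] at hd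
  rw [← hd, ← Category.assoc, hc, zero_comp]

variable {R : Type*} [CommRing R] [CategoryTheory.Linear R A]

lemma smul_eq_zero_of_kernel_null {X Y Q : A} (π : R) (q : X ⟶ Y)
    (hker : π • 𝟙 (kernel q) = 0) (e : Q ⟶ X) (he : e ≫ q = 0) : π • e = 0 := by
  have h1 : e = kernel.lift q e he ≫ kernel.ι q := (kernel.lift_ι _ _ _).symm
  rw [h1, ← Linear.comp_smul,
    show (π • kernel.ι q) = (π • 𝟙 (kernel q)) ≫ kernel.ι q by
      rw [Linear.smul_comp, Category.id_comp],
    hker, zero_comp, comp_zero]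

lemma smul_comp_cokernel_pi_zero {X Y Q : A} (π : R) (q : X ⟶ Y)
    (hcok : π • 𝟙 (cokernel q) = 0) (e : Q ⟶ Y) : (π • e) ≫ cokernel.π q = 0 := by
  have h1 : (π • e) ≫ cokernel.π q = e ≫ cokernel.π q ≫ (π • 𝟙 (cokernel q)) := by
    simp [Linear.smul_comp, Linear.comp_smul]
  rw [h1, hcok, comp_zero, comp_zero]


lemma step_lift (π c' : R) {P M N : CochainComplex A ℤ} (g : P ⟶ N) (f : M ⟶ N) (i : ℤ)
    [Projective (P.X i)]
    (h1 : P.X (i+1) ⟶ M.X (i+1)) (h2 : P.X (i+1+1) ⟶ M.X (i+1+1))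
    (s2 : P.X (i+1+1) ⟶ N.X (i+1)) (s1 : P.X (i+1) ⟶ N.X i)
    (hcomm1 : h1 ≫ M.d (i+1) (i+1+1) = P.d (i+1) (i+1+1) ≫ h2)
    (hhtp1 : h1 ≫ f.f (i+1) = c' • g.f (i+1) + P.d (i+1) (i+1+1) ≫ s2 + s1 ≫ N.d i (i+1))
    (hker : π • 𝟙 (kernel (homologyMap f (i+1))) = 0)
    (hcok : π • 𝟙 (cokernel (homologyMap f i)) = 0) :
    ∃ (hi : P.X i ⟶ M.X i) (si : P.X i ⟶ N.X (i-1)),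
      hi ≫ M.d i (i+1) = (π^2 : R) • (P.d i (i+1) ≫ h1) ∧
      hi ≫ f.f i = (π^2 * c') • g.f i + P.d i (i+1) ≫ ((π^2 : R) • s1) + si ≫ N.d (i-1) i := by
  -- the cycle `u`
  set u : P.X i ⟶ M.X (i+1) := P.d i (i+1) ≫ h1 with hu_def
  have hu : u ≫ M.d (i+1) (i+1+1) = 0 := by
    rw [hu_def, Category.assoc, hcomm1, ← Category.assoc, P.d_comp_d, zero_comp]
  set uc : P.X i ⟶ M.cycles (i+1) := M.liftCycles u (i+1+1) (CochainComplex.next ℤ (i+1)) hu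
    with huc_def
  set t' : P.X i ⟶ N.X i := c' • g.f i + P.d i (i+1) ≫ s1 with ht'
  have hx : u ≫ f.f (i+1) = t' ≫ N.d i (i+1) := by
    rw [hu_def, Category.assoc, hhtp1, ht']
    simp only [Preadditive.comp_add, Preadditive.add_comp, Linear.comp_smul, Linear.smul_comp,
      Category.assoc]
    rw [← g.comm i (i+1), ← Category.assoc (P.d i (i+1)) (P.d (i+1) (i+1+1)) s2, P.d_comp_d,
      zero_comp, add_zero]
  have key1 : uc ≫ M.homologyπ (i+1) ≫ homologyMap f (i+1) = 0 := by
    rw [homologyπ_naturality f (i+1), ← Category.assoc, huc_def,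
      liftCycles_comp_cyclesMap]
    exact N.liftCycles_homologyπ_eq_zero_of_boundary (u ≫ f.f (i+1)) (i+1+1)
      (CochainComplex.next ℤ (i+1)) t' hx
  have key2 : (π • uc) ≫ M.homologyπ (i+1) = 0 := by
    have h0 : (uc ≫ M.homologyπ (i+1)) ≫ homologyMap f (i+1) = 0 := by
      rw [Category.assoc]; exact key1
    have h3 := smul_eq_zero_of_kernel_null π (homologyMap f (i+1)) hker _ h0
    rw [Linear.smul_comp]; exact h3
  obtain ⟨w0, hw0⟩ := lift_of_isColimit_comp_zero (M.toCycles i (i+1))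
    (M.homologyIsCokernel i (i+1) (by rw [CochainComplex.prev]; omega)) (π • uc) key2
  have hw : w0 ≫ M.d i (i+1) = π • u := by
    calc w0 ≫ M.d i (i+1) = w0 ≫ (M.toCycles i (i+1) ≫ M.iCycles (i+1)) := by
          rw [toCycles_i]
      _ = (π • uc) ≫ M.iCycles (i+1) := by rw [← Category.assoc, hw0]
      _ = π • u := by rw [Linear.smul_comp, huc_def, liftCycles_i]
  set v : P.X i ⟶ N.X i := w0 ≫ f.f i - π • t' with hv_def
  have hv : v ≫ N.d i (i+1) = 0 := by
    rw [hv_def, Preadditive.sub_comp, Category.assoc, f.comm i (i+1), ← Category.assoc, hw,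
      Linear.smul_comp, hx, Linear.smul_comp, sub_self]
  set vc : P.X i ⟶ N.cycles i := N.liftCycles v (i+1) (CochainComplex.next ℤ i) hv with hvc_def
  have hcp : (π • (vc ≫ N.homologyπ i)) ≫ cokernel.π (homologyMap f i) = 0 :=
    smul_comp_cokernel_pi_zero π _ hcok _
  obtain ⟨z, hz⟩ := lift_of_cokernel_comp_zero (homologyMap f i) _ hcp
  set zc : P.X i ⟶ M.cycles i := Projective.factorThru z (M.homologyπ i) with hzc_def
  have hzc : zc ≫ M.homologyπ i = z := Projective.factorThru_comp _ _
  set e : P.X i ⟶ N.cycles i := zc ≫ cyclesMap f i - π • vc with he_def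
  have he : e ≫ N.homologyπ i = 0 := by
    rw [he_def, Preadditive.sub_comp, Category.assoc, ← homologyπ_naturality f i,
      ← Category.assoc, hzc, hz, Linear.smul_comp, sub_self]
  obtain ⟨s0, hs0⟩ := lift_of_isColimit_comp_zero (N.toCycles (i-1) i)
    (N.homologyIsCokernel (i-1) i (by rw [CochainComplex.prev])) e he
  have hs0d : s0 ≫ N.d (i-1) i = (zc ≫ M.iCycles i) ≫ f.f i - π • v := by
    calc s0 ≫ N.d (i-1) i = s0 ≫ (N.toCycles (i-1) i ≫ N.iCycles i) := by rw [toCycles_i]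
      _ = e ≫ N.iCycles i := by rw [← Category.assoc, hs0]
      _ = _ := by
          rw [he_def, Preadditive.sub_comp, Category.assoc, cyclesMap_i, ← Category.assoc,
            Linear.smul_comp, hvc_def, liftCycles_i]
  refine ⟨π • w0 - zc ≫ M.iCycles i, -s0, ?_, ?_⟩
  · rw [Preadditive.sub_comp, Linear.smul_comp, hw, Category.assoc, iCycles_d, comp_zero,
      sub_zero, smul_smul, ← pow_two]
  · have hwf : w0 ≫ f.f i = v + π • t' := by rw [hv_def]; abel
    have hzf : (zc ≫ M.iCycles i) ≫ f.f i = s0 ≫ N.d (i-1) i + π • v := by rw [hs0d]; abel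
    rw [Preadditive.sub_comp, Linear.smul_comp, hwf, hzf, ht']
    simp only [smul_add, smul_smul, Linear.comp_smul, Preadditive.neg_comp, ← pow_two]
    rw [show π * (π * c') = π^2 * c' from by ring]
    abel

end Aux


/-- **Lemma 3.6.** Let `𝒜` be an abelian category equipped with a ring homomorphism
`R → End(id_𝒜)` (e.g. an `R`-linear abelian category, where `π ∈ R` acts on each object `X` as
`π • 𝟙 X`), `a ≤ b` integers, and let `g : P^• ⟶ N^•`, `f : M^• ⟶ N^•` be morphisms of cochain
complexes such that (i) `M^i = N^i = 0` for `i > b`; (ii) `P^i` is projective for `i ∈ [a,b]`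
and zero for `i ∉ [a,b]`; (iii) `H^i(f)` is a `π`-isomorphism for `i > a` and `π`-surjective
for `i = a`. Then `π^{2(b-a+1)} • g` lifts along `f` up to homotopy: there is `h : P^• ⟶ M^•`
with `f ∘ h` homotopic to `π^{2(b-a+1)} • g`. -/
theorem pi_exact_homotopy_lift {R : Type*} [CommRing R] {A : Type*} [Category A]
    [Abelian A] [CategoryTheory.Linear R A] (π : R) (a b : ℤ) (hab : a ≤ b)
    {P M N : CochainComplex A ℤ} (g : P ⟶ N) (f : M ⟶ N)
    (hMz : ∀ i : ℤ, b < i → IsZero (M.X i))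
    (hNz : ∀ i : ℤ, b < i → IsZero (N.X i))
    (hPproj : ∀ i : ℤ, a ≤ i → i ≤ b → Projective (P.X i))
    (hPz : ∀ i : ℤ, i < a ∨ b < i → IsZero (P.X i))
    (hf : ∀ i : ℤ, a < i → (π • 𝟙 (kernel (HomologicalComplex.homologyMap f i)) = 0 ∧
      π • 𝟙 (cokernel (HomologicalComplex.homologyMap f i)) = 0))
    (hfa : π • 𝟙 (cokernel (HomologicalComplex.homologyMap f a)) = 0) :
    ∃ h : P ⟶ M, Nonempty (Homotopy (h ≫ f) (π ^ (2 * (b - a + 1)).toNat • g)) := by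
  have key : ∀ k : ℕ, (k : ℤ) ≤ b - a + 1 →
      ∃ (h : ∀ j : ℤ, P.X j ⟶ M.X j) (s : ∀ p q : ℤ, P.X p ⟶ N.X q),
        (∀ j : ℤ, b + 1 - (k : ℤ) ≤ j → h j ≫ M.d j (j+1) = P.d j (j+1) ≫ h (j+1)) ∧
        (∀ j j' : ℤ, b + 1 - (k : ℤ) ≤ j → j' + 1 = j →
          h j ≫ f.f j = (π ^ (2*k) : R) • g.f j + P.d j (j+1) ≫ s (j+1) j
            + s j j' ≫ N.d j' j) := by
    intro k
    induction k with
    | zero =>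
      intro _
      refine ⟨fun _ => 0, fun _ _ => 0, fun j hj => by simp, fun j j' hj hj' => ?_⟩
      exact (hPz j (Or.inr (by omega))).eq_of_src _ _
    | succ k ih =>
      intro hk
      obtain ⟨h, s, hcomm, hhtp⟩ := ih (by push_cast at hk ⊢; omega)
      set i : ℤ := b - k with hi_def
      haveI : Projective (P.X i) := hPproj i (by push_cast at hk; omega) (by omega)
      have hker : π • 𝟙 (kernel (homologyMap f (i+1))) = 0 :=
        (hf (i+1) (by push_cast at hk; omega)).1
      have hcok : π • 𝟙 (cokernel (homologyMap f i)) = 0 := by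
        rcases lt_or_eq_of_le (show a ≤ i by push_cast at hk; omega) with hlt | heq
        · exact (hf i hlt).2
        · rw [← heq]; exact hfa
      have hcomm1 := hcomm (i+1) (by push_cast; omega)
      have hhtp1 := hhtp (i+1) i (by push_cast; omega) rfl
      obtain ⟨hi, si, eq1, eq2⟩ := step_lift π (π ^ (2*k)) g f i (h (i+1)) (h (i+1+1))
        (s (i+1+1) (i+1)) (s (i+1) i) hcomm1 hhtp1 hker hcok
      have hexp : (π : R)^2 * π^(2*k) = π^(2*(k+1)) := by rw [← pow_add]; congr 1; omega
      refine ⟨Function.update (fun j => (π^2 : R) • h j) i hi,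
        Function.update (fun p q => (π^2 : R) • s p q) i
          (Function.update (fun q => (π^2 : R) • s i q) (i-1) si), ?_, ?_⟩
      · intro j hj
        rcases eq_or_lt_of_le (show i ≤ j by push_cast at hj; omega) with rfl | hlt
        · rw [Function.update_self, Function.update_of_ne (by omega : i + 1 ≠ i)]
          rw [eq1, Linear.comp_smul]
        · rw [Function.update_of_ne (by omega : j ≠ i),
            Function.update_of_ne (by omega : j + 1 ≠ i), Linear.smul_comp, Linear.comp_smul,
            hcomm j (by push_cast; omega)]
      · intro j j' hj hj'
        rcases eq_or_lt_of_le (show i ≤ j by push_cast at hj; omega) with rfl | hlt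
        · obtain rfl : j' = i - 1 := by omega
          rw [Function.update_self, Function.update_of_ne (by omega : i + 1 ≠ i),
            Function.update_self, Function.update_self, eq2, hexp]
        · rw [Function.update_of_ne (by omega : j ≠ i),
            Function.update_of_ne (by omega : j + 1 ≠ i),
            Function.update_of_ne (by omega : j ≠ i), Linear.smul_comp,
            hhtp j j' (by push_cast; omega) hj']
          simp only [smul_add, smul_smul, Linear.comp_smul, Linear.smul_comp, hexp]
  obtain ⟨h, s, hcomm, hhtp⟩ := key (b - a + 1).toNat (by omega)
  have hth : b + 1 - ((b - a + 1).toNat : ℤ) = a := by omega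
  rw [hth] at hcomm hhtp
  refine ⟨{ f := h, comm' := ?_ }, ?_⟩
  · intro p q hpq
    obtain rfl : p + 1 = q := hpq
    by_cases hp : a ≤ p
    · exact hcomm p hp
    · exact (hPz p (Or.inl (by omega))).eq_of_src _ _
  · refine ⟨⟨fun p q => if q + 1 = p then s p q else 0, ?_, ?_⟩⟩
    · intro p q hnr
      exact if_neg hnr
    · intro p
      have hexp2 : (2 * (b - a + 1)).toNat = 2 * (b - a + 1).toNat := by omega
      rw [dNext_eq _ (show (ComplexShape.up ℤ).Rel p (p+1) from rfl),
        prevD_eq _ (show (ComplexShape.up ℤ).Rel (p-1) p from by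
          simp only [ComplexShape.up_Rel]; omega)]
      rw [if_pos rfl, if_pos (show p - 1 + 1 = p by omega)]
      simp only [HomologicalComplex.comp_f, HomologicalComplex.smul_f_apply, hexp2]
      by_cases hp : a ≤ p
      · rw [hhtp p (p-1) hp (by omega)]
        abel
      · exact (hPz p (Or.inl (by omega))).eq_of_src _ _
end

section
/- Let R be a commutative ring, π ∈ R, and let a ≤ b, a' ≤ b' be integers with a' ≥ a and b' ≥ b. Then every π-[a,b]-pseudo-coherent cochain complex of R-modules is also π-[a',b']-pseudo-coherent. -/
open CategoryTheory

section PseudoCoherence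

variable {R : Type*} [CommRing R]

/-- A linear map (in `ModuleCat R`) is a `π`-isomorphism if its kernel and cokernel are
annihilated by `π`. -/
def IsPiIsomorphism (π : R) {M N : ModuleCat R} (f : M ⟶ N) : Prop :=
  (∀ x : M, f x = 0 → π • x = 0) ∧ (∀ y : N, ∃ x : M, π • y = f x)

/-- A linear map (in `ModuleCat R`) is `π`-surjective if its cokernel is annihilated by `π`. -/
def IsPiSurjective (π : R) {M N : ModuleCat R} (f : M ⟶ N) : Prop :=
  ∀ y : N, ∃ x : M, π • y = f x

/-- A morphism of cochain complexes of `R`-modules `f : P^• ⟶ M^•` is a `π`-`[a,b]`-pseudo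
resolution if `P^•` is a complex of finite free `R`-modules vanishing outside `[a,b]`, and
`H^i(f)` is a `π`-isomorphism for `i > a` and `π`-surjective for `i = a`. -/
def IsPiPseudoResolution (π : R) (a b : ℤ) {P M : CochainComplex (ModuleCat R) ℤ}
    (f : P ⟶ M) : Prop :=
  (∀ i : ℤ, Module.Free R (P.X i)) ∧ (∀ i : ℤ, Module.Finite R (P.X i)) ∧
  (∀ i : ℤ, i < a ∨ b < i → ∀ x : P.X i, x = 0) ∧
  (∀ i : ℤ, a < i → IsPiIsomorphism π (HomologicalComplex.homologyMap f i)) ∧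
  IsPiSurjective π (HomologicalComplex.homologyMap f a)

/-- A cochain complex of `R`-modules is `π`-`[a,b]`-pseudo-coherent if it vanishes in degrees
`> b` and admits a `π`-`[a,b]`-pseudo resolution. -/
def IsPiPseudoCoherent (π : R) (a b : ℤ) (M : CochainComplex (ModuleCat R) ℤ) : Prop :=
  (∀ i : ℤ, b < i → ∀ x : M.X i, x = 0) ∧
  ∃ (P : CochainComplex (ModuleCat R) ℤ) (f : P ⟶ M), IsPiPseudoResolution π a b f

end PseudoCoherence

/-! If `f : P ⟶ M` is a `π`-`[a,b]`-pseudo resolution, precompose it with the inclusion of the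
brutal truncation `σ≥a' P`. This complex is still finite free, now lives in `[a', b] ⊆ [a', b']`,
and since it agrees with `P` in degrees `≥ a'`, the inclusion is an isomorphism on `H^i` for
`i > a'` and surjective on `H^{a'}`, which is all the `π`-conditions need. -/

section PiMaps

variable {R : Type*} [CommRing R] {π : R} {M N K : ModuleCat R} {e : M ⟶ N} {h : N ⟶ K}

lemma IsPiSurjective.comp_of_epi [Epi e] (hh : IsPiSurjective π h) :
    IsPiSurjective π (e ≫ h) := by
  intro z
  obtain ⟨y, hy⟩ := hh z
  obtain ⟨x, rfl⟩ := (ModuleCat.epi_iff_surjective e).1 inferInstance y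
  exact ⟨x, hy⟩

lemma IsPiIsomorphism.comp_of_isIso [IsIso e] (hh : IsPiIsomorphism π h) :
    IsPiIsomorphism π (e ≫ h) := by
  refine ⟨fun x hx => ?_, IsPiSurjective.comp_of_epi hh.2⟩
  apply (ModuleCat.mono_iff_injective e).1 inferInstance
  rw [map_smul, map_zero]
  exact hh.1 (e x) hx

end PiMaps

namespace CochainComplex

variable {R : Type*} [CommRing R] {n : ℤ} (P : CochainComplex (ModuleCat R) ℤ)

def brutalTruncGESubmodule (n i : ℤ) : Submodule R (P.X i) :=
  if n ≤ i then ⊤ else ⊥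

lemma brutalTruncGESubmodule_of_le {i : ℤ} (hi : n ≤ i) : P.brutalTruncGESubmodule n i = ⊤ :=
  if_pos hi

lemma brutalTruncGESubmodule_of_lt {i : ℤ} (hi : i < n) : P.brutalTruncGESubmodule n i = ⊥ :=
  if_neg (not_le.2 hi)

lemma mapsTo_d_brutalTruncGESubmodule (i j : ℤ) :
    Set.MapsTo (P.d i j) (P.brutalTruncGESubmodule n i) (P.brutalTruncGESubmodule n j) := by
  intro x hx
  by_cases hj : n ≤ j
  · simp [P.brutalTruncGESubmodule_of_le hj]
  by_cases hij : i + 1 = j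
  · rw [P.brutalTruncGESubmodule_of_lt (show i < n by omega), SetLike.mem_coe,
      Submodule.mem_bot] at hx
    simp [hx]
  · rw [P.shape i j (by simpa using hij)]
    exact zero_mem _

/-- The brutal truncation `σ≥n P`, realised as a subcomplex of `P` so that its inclusion into `P`
is at hand (Mathlib's `HomologicalComplex.stupidTrunc` does not provide it yet). -/
def brutalTruncGE (n : ℤ) : CochainComplex (ModuleCat R) ℤ where
  X i := ModuleCat.of R (P.brutalTruncGESubmodule n i)
  d i j := ModuleCat.ofHom ((P.d i j).hom.restrict (P.mapsTo_d_brutalTruncGESubmodule i j))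
  shape i j hij := by
    ext x
    exact congrArg (fun g : P.X i ⟶ P.X j => g x.1) (P.shape i j hij)
  d_comp_d' i j k _ _ := by
    ext x
    exact congrArg (fun g : P.X i ⟶ P.X k => g x.1) (P.d_comp_d i j k)

def ιBrutalTruncGE (n : ℤ) : P.brutalTruncGE n ⟶ P where
  f i := ModuleCat.ofHom (P.brutalTruncGESubmodule n i).subtype
  comm' _ _ _ := rfl

instance mono_ιBrutalTruncGE_f (i : ℤ) : Mono ((P.ιBrutalTruncGE n).f i) :=
  (ModuleCat.mono_iff_injective _).2 Subtype.val_injective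

lemma isIso_ιBrutalTruncGE_f {i : ℤ} (hi : n ≤ i) : IsIso ((P.ιBrutalTruncGE n).f i) := by
  rw [ConcreteCategory.isIso_iff_bijective]
  refine ⟨Subtype.val_injective, fun y => ⟨⟨y, ?_⟩, rfl⟩⟩
  simp [P.brutalTruncGESubmodule_of_le hi]

lemma subsingleton_brutalTruncGE_X {i : ℤ} (hi : i < n) :
    Subsingleton ((P.brutalTruncGE n).X i) := by
  change Subsingleton (P.brutalTruncGESubmodule n i)
  rw [P.brutalTruncGESubmodule_of_lt hi]
  infer_instance

lemma epi_homologyMap_ιBrutalTruncGE {i : ℤ} (hi : n ≤ i) :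
    Epi (HomologicalComplex.homologyMap (P.ιBrutalTruncGE n) i) :=
  ShortComplex.epi_homologyMap_of_epi_cyclesMap' _
    (ShortComplex.isIso_cyclesMap_of_isIso_of_mono' _ (P.isIso_ιBrutalTruncGE_f hi)
      (P.mono_ιBrutalTruncGE_f _)).epi_of_iso

lemma isIso_homologyMap_ιBrutalTruncGE {i : ℤ} (hi : n < i) :
    IsIso (HomologicalComplex.homologyMap (P.ιBrutalTruncGE n) i) :=
  ShortComplex.isIso_homologyMap_of_epi_of_isIso_of_mono' _
    (P.isIso_ιBrutalTruncGE_f (i := (ComplexShape.up ℤ).prev i)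
      (by simp only [prev]; omega)).epi_of_iso
    (P.isIso_ιBrutalTruncGE_f hi.le) (P.mono_ιBrutalTruncGE_f _)

instance free_brutalTruncGE_X (i : ℤ) [Module.Free R (P.X i)] :
    Module.Free R ((P.brutalTruncGE n).X i) := by
  by_cases hi : n ≤ i
  · have := P.isIso_ιBrutalTruncGE_f hi
    exact Module.Free.of_equiv (asIso ((P.ιBrutalTruncGE n).f i)).toLinearEquiv.symm
  · have := P.subsingleton_brutalTruncGE_X (not_le.1 hi)
    infer_instance

instance finite_brutalTruncGE_X (i : ℤ) [Module.Finite R (P.X i)] :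
    Module.Finite R ((P.brutalTruncGE n).X i) := by
  by_cases hi : n ≤ i
  · have := P.isIso_ιBrutalTruncGE_f hi
    exact Module.Finite.equiv (asIso ((P.ιBrutalTruncGE n).f i)).toLinearEquiv.symm
  · have := P.subsingleton_brutalTruncGE_X (not_le.1 hi)
    infer_instance

end CochainComplex

namespace IsPiPseudoResolution

variable {R : Type*} [CommRing R] {π : R} {a b : ℤ} {P M : CochainComplex (ModuleCat R) ℤ}
  {f : P ⟶ M}

lemma mono_right {b' : ℤ} (hf : IsPiPseudoResolution π a b f) (hb : b ≤ b') :
    IsPiPseudoResolution π a b' f := by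
  obtain ⟨hfree, hfin, hzero, hiso, hsurj⟩ := hf
  refine ⟨hfree, hfin, fun i hi => hzero i ?_, hiso, hsurj⟩
  omega

lemma isPiSurjective_homologyMap (hf : IsPiPseudoResolution π a b f) {i : ℤ} (hi : a ≤ i) :
    IsPiSurjective π (HomologicalComplex.homologyMap f i) := by
  rcases hi.eq_or_lt with rfl | hi
  · exact hf.2.2.2.2
  · exact (hf.2.2.2.1 i hi).2

lemma ιBrutalTruncGE_comp {a' : ℤ} (hf : IsPiPseudoResolution π a b f) (ha : a ≤ a') :
    IsPiPseudoResolution π a' b (P.ιBrutalTruncGE a' ≫ f) := by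
  have hsurj := hf.isPiSurjective_homologyMap ha
  obtain ⟨hfree, hfin, hzero, hiso, -⟩ := hf
  refine ⟨fun i => have := hfree i; inferInstance, fun i => have := hfin i; inferInstance, ?_,
    fun i hi => ?_, ?_⟩
  · rintro i (hi | hi) x
    · exact (P.subsingleton_brutalTruncGE_X hi).elim x 0
    · exact Subtype.ext (hzero i (Or.inr hi) x.1)
  · rw [HomologicalComplex.homologyMap_comp]
    have := P.isIso_homologyMap_ιBrutalTruncGE hi
    exact (hiso i (by omega)).comp_of_isIso
  · rw [HomologicalComplex.homologyMap_comp]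
    have := P.epi_homologyMap_ιBrutalTruncGE (le_refl a')
    exact hsurj.comp_of_epi

end IsPiPseudoResolution

theorem isPiPseudoCoherent_translation_general {R : Type*} [CommRing R] (π : R)
    (a b a' b' : ℤ) (ha : a ≤ a') (hb : b ≤ b')
    (M : CochainComplex (ModuleCat R) ℤ) (hM : IsPiPseudoCoherent π a b M) :
    IsPiPseudoCoherent π a' b' M := by
  obtain ⟨hzero, P, f, hf⟩ := hM
  exact ⟨fun i hi => hzero i (by omega), P.brutalTruncGE a', P.ιBrutalTruncGE a' ≫ f,
    (hf.ιBrutalTruncGE_comp ha).mono_right hb⟩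

/-- **Lemma 4.2.** For integers `a' ≥ a` and `b' ≥ b` with `a' ≤ b'`, a
`π`-`[a,b]`-pseudo-coherent complex of `R`-modules is also `π`-`[a',b']`-pseudo-coherent. -/
theorem isPiPseudoCoherent_translation {R : Type*} [CommRing R] (π : R)
    (a b a' b' : ℤ) (hab : a ≤ b) (ha'b' : a' ≤ b') (ha : a ≤ a') (hb : b ≤ b')
    (M : CochainComplex (ModuleCat R) ℤ) (hM : IsPiPseudoCoherent π a b M) :
    IsPiPseudoCoherent π a' b' M :=
  isPiPseudoCoherent_translation_general π a b a' b' ha hb M hM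
end

section
/- Let R be a commutative ring, π ∈ R, a ≤ b integers, and let M^• and N^• be cochain complexes of R-modules vanishing in degrees > b. Let α : M^• → N^• be a morphism of complexes such that H^i(α) : H^i(M^•) → H^i(N^•) is a π-isomorphism for every i ≥ a. If M^• is π-[a,b]-pseudo-coherent, then N^• is π²-[a,b]-pseudo-coherent. -/
open CategoryTheory

/-- **Lemma 4.3(1).** Let `M^•` and `N^•` be complexes of `R`-modules vanishing in degrees
`> b`, and let `α : M^• ⟶ N^•` induce a `π`-isomorphism `H^i(α)` for all `i ≥ a`. If `M^•`
is `π`-`[a,b]`-pseudo-coherent, then `N^•` is `π²`-`[a,b]`-pseudo-coherent. -/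
theorem isPiPseudoCoherent_of_pi_iso {R : Type*} [CommRing R] (π : R) (a b : ℤ) (hab : a ≤ b)
    {M N : CochainComplex (ModuleCat R) ℤ} (α : M ⟶ N)
    (hMz : ∀ i : ℤ, b < i → ∀ x : M.X i, x = 0)
    (hNz : ∀ i : ℤ, b < i → ∀ x : N.X i, x = 0)
    (hα : ∀ i : ℤ, a ≤ i → IsPiIsomorphism π (HomologicalComplex.homologyMap α i))
    (hM : IsPiPseudoCoherent π a b M) :
    IsPiPseudoCoherent (π ^ 2) a b N := by
  obtain ⟨hMz', P, f, hfree, hfin, hzero, hiso, hsurj⟩ := hM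
  refine ⟨hNz, P, f ≫ α, hfree, hfin, hzero, ?_, ?_⟩
  · intro i hi
    have hf := hiso i hi
    have ha := hα i hi.le
    rw [HomologicalComplex.homologyMap_comp]
    constructor
    · intro x hx
      have hx' : HomologicalComplex.homologyMap α i
          (HomologicalComplex.homologyMap f i x) = 0 := hx
      have h1 : π • HomologicalComplex.homologyMap f i x = 0 := ha.1 _ hx'
      rw [← map_smul] at h1
      have h2 := hf.1 _ h1
      rwa [smul_smul, ← pow_two] at h2
    · intro y
      obtain ⟨m, hm⟩ := ha.2 y
      obtain ⟨p, hp⟩ := hf.2 m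
      refine ⟨p, ?_⟩
      rw [pow_two, ← smul_smul, hm, ← map_smul, hp]; rfl
  · intro y
    obtain ⟨m, hm⟩ := (hα a le_rfl).2 y
    obtain ⟨p, hp⟩ := hsurj m
    refine ⟨p, ?_⟩
    rw [HomologicalComplex.homologyMap_comp, pow_two, ← smul_smul, hm, ← map_smul, hp]; rfl
end

section
/- Let a ≤ b be integers. There exists an integer l ≥ 0 depending only on b−a such that: for every commutative ring R, every π ∈ R, and all cochain complexes M^• and N^• of R-modules vanishing in degrees > b which are isomorphic in the derived category D(R), if M^• is π-[a,b]-pseudo-coherent then N^• is π^l-[a,b]-pseudo-coherent. -/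
/-!
A π-pseudo resolution `f : P ⟶ M` has `P` a bounded above complex of free modules, so `P` is
K-projective and `f` lifts, up to homotopy, along the quasi-isomorphism `s : K ⟶ M` to some
`g : P ⟶ K`. Since quasi-isomorphisms induce isomorphisms on cohomology, `g` and then `g ≫ t` are
again π-pseudo resolutions, so one can take `l = 1`.
-/

open CategoryTheory

open HomologicalComplex

namespace CochainComplex.IsKProjective

variable {C : Type*} [Category* C] [Abelian C]

lemma exists_homotopy_comp_quasiIso {P K M : CochainComplex C ℤ} [P.IsKProjective]
    (s : K ⟶ M) [QuasiIso s] (f : P ⟶ M) : ∃ g : P ⟶ K, Nonempty (Homotopy (g ≫ s) f) := by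
  have hP := IsKProjective.leftOrthogonal P
  rw [← ObjectProperty.isColocal_trW, ← HomotopyCategory.quasiIso_eq_trW_subcategoryAcyclic] at hP
  obtain ⟨g, hg⟩ := (hP _ ((HomotopyCategory.quotient_map_mem_quasiIso_iff s).2 ‹_›)).2
    ((HomotopyCategory.quotient _ _).map f)
  obtain ⟨g, rfl⟩ := (HomotopyCategory.quotient _ _).map_surjective g
  exact ⟨g, ⟨HomotopyCategory.homotopyOfEq _ _ (by simpa using hg)⟩⟩

end CochainComplex.IsKProjective

section PiMorphisms

variable {R : Type*} [CommRing R] (π : R) {A B C : ModuleCat R}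

lemma isPiSurjective_comp_isIso_iff (u : A ⟶ B) (e : B ⟶ C) [IsIso e] :
    IsPiSurjective π (u ≫ e) ↔ IsPiSurjective π u := by
  let e' := (asIso e).toLinearEquiv
  refine ⟨fun h y => ?_, fun h z => ?_⟩
  · obtain ⟨x, hx⟩ := h (e y)
    exact ⟨x, e'.injective (by simpa [e'] using hx)⟩
  · obtain ⟨x, hx⟩ := h (e'.symm z)
    exact ⟨x, by simpa [e'] using congrArg e' hx⟩

lemma isPiIsomorphism_comp_isIso_iff (u : A ⟶ B) (e : B ⟶ C) [IsIso e] :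
    IsPiIsomorphism π (u ≫ e) ↔ IsPiIsomorphism π u := by
  have he : ∀ y, e y = 0 ↔ y = 0 := fun y => (asIso e).toLinearEquiv.map_eq_zero_iff
  simp only [IsPiIsomorphism, ModuleCat.comp_apply, he]
  exact and_congr_right' (isPiSurjective_comp_isIso_iff π u e)

end PiMorphisms

namespace IsPiPseudoResolution

variable {R : Type*} [CommRing R] {π : R} {a b : ℤ} {P K M : CochainComplex (ModuleCat R) ℤ}

lemma of_homotopy {f f' : P ⟶ M} (hf : IsPiPseudoResolution π a b f) (H : Homotopy f f') :
    IsPiPseudoResolution π a b f' := by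
  obtain ⟨hfree, hfin, hvan, hiso, hsurj⟩ := hf
  refine ⟨hfree, hfin, hvan, fun i hi => ?_, ?_⟩
  · rw [← H.homologyMap_eq]; exact hiso i hi
  · rw [← H.homologyMap_eq]; exact hsurj

lemma comp_quasiIso_iff (g : P ⟶ K) (s : K ⟶ M) [QuasiIso s] :
    IsPiPseudoResolution π a b (g ≫ s) ↔ IsPiPseudoResolution π a b g := by
  simp only [IsPiPseudoResolution, homologyMap_comp, isPiIsomorphism_comp_isIso_iff,
    isPiSurjective_comp_isIso_iff]

lemma isKProjective {f : P ⟶ M} (hf : IsPiPseudoResolution π a b f) : P.IsKProjective := by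
  obtain ⟨hfree, -, hvan, -⟩ := hf
  have : P.IsStrictlyLE b := (P.isStrictlyLE_iff b).2 fun i hi =>
    have : Subsingleton (P.X i) := ⟨fun x y => by rw [hvan i (.inr hi) x, hvan i (.inr hi) y]⟩
    ModuleCat.isZero_of_subsingleton _
  have (i : ℤ) : Projective (P.X i) :=
    ModuleCat.projective_of_free (Module.Free.chooseBasis R (P.X i))
  exact P.isKProjective_of_projective b

end IsPiPseudoResolution

universe u

/-- **Proposition 4.4.** There is an integer `l ≥ 0` depending only on `b - a` such that: for
every commutative ring `R`, every `π ∈ R`, and all cochain complexes `M^•`, `N^•` of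
`R`-modules vanishing in degrees `> b` which are isomorphic in the derived category `D(R)`
(equivalently, which are linked by a roof of quasi-isomorphisms `M^• ⟵ K^• ⟶ N^•`), if `M^•`
is `π`-`[a,b]`-pseudo-coherent then `N^•` is `π^l`-`[a,b]`-pseudo-coherent. -/
theorem isPiPseudoCoherent_of_derived_iso :
    ∃ l : ℤ → ℕ, ∀ (a b : ℤ), a ≤ b →
      ∀ (R : Type u) [CommRing R] (π : R) (M N : CochainComplex (ModuleCat R) ℤ),
        (∀ i : ℤ, b < i → ∀ x : M.X i, x = 0) →
        (∀ i : ℤ, b < i → ∀ x : N.X i, x = 0) →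
        (∃ (K : CochainComplex (ModuleCat R) ℤ) (s : K ⟶ M) (t : K ⟶ N),
          QuasiIso s ∧ QuasiIso t) →
        IsPiPseudoCoherent π a b M →
        IsPiPseudoCoherent (π ^ l (b - a)) a b N := by
  refine ⟨fun _ => 1, fun a b _ R _ π M N _ hN ⟨K, s, t, _, _⟩ ⟨_, P, f, hf⟩ => ?_⟩
  have := hf.isKProjective
  obtain ⟨g, ⟨H⟩⟩ := CochainComplex.IsKProjective.exists_homotopy_comp_quasiIso s f
  have hg : IsPiPseudoResolution π a b g :=
    (IsPiPseudoResolution.comp_quasiIso_iff g s).1 (hf.of_homotopy H.symm)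
  rw [pow_one]
  exact ⟨hN, P, g ≫ t, (IsPiPseudoResolution.comp_quasiIso_iff g t).2 hg⟩
end

section
/- Let a ≤ b be integers. There exists an integer l ≥ 0 depending only on b−a such that: for every commutative ring R, every π ∈ R, every morphism α : M_1^• → M_2^• of π-[a,b]-pseudo-coherent cochain complexes of R-modules, and all given π-[a,b]-pseudo resolutions f_i : P_i^• → M_i^• (i = 1,2), there exists a morphism of complexes α' : P_1^• → P_2^• such that (π^l·α)∘f_1 is homotopic to f_2∘α'. -/
open CategoryTheory

/-!
Descending induction on the degree, starting above `b` where `P₁` vanishes: after `n` steps one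
has maps `g i : P₁^i → P₂^i` and `h i : P₁^i → M₂^{i-1}` which, in degrees `≥ b + 1 - n`, form a
chain map and a homotopy `π^{2n} (α ∘ f₁) ≃ f₂ ∘ g`. In the next degree `k` the obstruction to
extending is a cycle of the mapping cone of `f₂`; `π`-injectivity of `H^{k+1}(f₂)` and
`π`-surjectivity of `H^k(f₂)` each contribute one factor `π` to removing it, and since `P₁^k` is
free this can be done linearly. Below `a` there is nothing left to do, so `l = 2 (b - a + 1)`.
-/

lemma Module.projective_lifting_property_of_range_le {R : Type*} [Semiring R]
    {P M N : Type*} [AddCommMonoid P] [Module R P] [AddCommMonoid M] [Module R M]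
    [AddCommMonoid N] [Module R N] [Module.Projective R P] (f : M →ₗ[R] N) (g : P →ₗ[R] N)
    (hg : LinearMap.range g ≤ LinearMap.range f) : ∃ h : P →ₗ[R] M, f ∘ₗ h = g := by
  obtain ⟨h, hh⟩ := Module.projective_lifting_property f.rangeRestrict
    (g.codRestrict _ fun x => hg ⟨x, rfl⟩) f.surjective_rangeRestrict
  exact ⟨h, by simpa using congrArg ((LinearMap.range f).subtype ∘ₗ ·) hh⟩

namespace HomologicalComplex

variable {R : Type*} [CommRing R] {ι : Type*} {c : ComplexShape ι}

noncomputable def moduleCatHomologyClass (K : HomologicalComplex (ModuleCat R) c) (j : ι) :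
    LinearMap.ker (K.d j (c.next j)).hom →ₗ[R] K.homology j :=
  ((K.sc j).moduleCatCyclesIso.inv ≫ (K.sc j).homologyπ).hom

lemma moduleCatHomologyClass_surjective (K : HomologicalComplex (ModuleCat R) c) (j : ι) :
    Function.Surjective (K.moduleCatHomologyClass j) :=
  (ModuleCat.epi_iff_surjective ((K.sc j).moduleCatCyclesIso.inv ≫ (K.sc j).homologyπ)).1
    inferInstance

lemma moduleCatHomologyClass_eq_zero_iff (K : HomologicalComplex (ModuleCat R) c) {j : ι}
    (z : LinearMap.ker (K.d j (c.next j)).hom) :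
    K.moduleCatHomologyClass j z = 0 ↔ ∃ x, K.d (c.prev j) j x = z := by
  have hinj : Function.Injective (K.sc j).moduleCatHomologyIso.inv :=
    (ModuleCat.mono_iff_injective _).1 inferInstance
  have hz : K.moduleCatHomologyClass j z =
      (K.sc j).moduleCatHomologyIso.inv ((K.sc j).moduleCatLeftHomologyData.π z) :=
    ConcreteCategory.congr_hom (K.sc j).moduleCatCyclesIso_inv_π z
  rw [hz]
  refine (hinj.eq_iff' (map_zero _)).trans ((Submodule.Quotient.mk_eq_zero _).trans ?_)
  exact ⟨fun ⟨x, hx⟩ => ⟨x, congrArg Subtype.val hx⟩, fun ⟨x, hx⟩ => ⟨x, Subtype.ext hx⟩⟩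

lemma homologyMap_moduleCatHomologyClass {K L : HomologicalComplex (ModuleCat R) c}
    (f : K ⟶ L) {j : ι} (z₁ : LinearMap.ker (K.d j (c.next j)).hom)
    (z₂ : LinearMap.ker (L.d j (c.next j)).hom) (h : f.f j z₁ = z₂) :
    homologyMap f j (K.moduleCatHomologyClass j z₁) = L.moduleCatHomologyClass j z₂ := by
  let φ := (shortComplexFunctor (ModuleCat R) c j).map f
  refine (ConcreteCategory.congr_hom (ShortComplex.homologyπ_naturality φ) _).trans
    (congrArg (L.homologyπ j) ((ModuleCat.mono_iff_injective (L.iCycles j)).1 inferInstance ?_))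
  have h₁ : K.iCycles j ((K.sc j).moduleCatCyclesIso.inv z₁) = z₁ :=
    ConcreteCategory.congr_hom (K.sc j).moduleCatCyclesIso_inv_iCycles z₁
  have h₂ : L.iCycles j ((L.sc j).moduleCatCyclesIso.inv z₂) = z₂ :=
    ConcreteCategory.congr_hom (L.sc j).moduleCatCyclesIso_inv_iCycles z₂
  have h₃ : L.iCycles j (ShortComplex.cyclesMap φ ((K.sc j).moduleCatCyclesIso.inv z₁)) =
      f.f j (K.iCycles j ((K.sc j).moduleCatCyclesIso.inv z₁)) :=
    ConcreteCategory.congr_hom (ShortComplex.cyclesMap_i φ) _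
  exact h₃.trans ((congrArg (f.f j) h₁).trans (h.trans h₂.symm))

variable {K L : HomologicalComplex (ModuleCat R) c} (f : K ⟶ L) (π : R) {i j k l : ι}

lemma Hom.comm_apply (x : K.X j) : L.d j k (f.f j x) = f.f k (K.d j k x) := by
  rw [← ConcreteCategory.comp_apply, ← ConcreteCategory.comp_apply, f.comm]

lemma exists_smul_eq_add_d_of_isPiSurjective (hij : c.prev j = i) (hjk : c.next j = k)
    (hf : IsPiSurjective π (homologyMap f j)) (y : L.X j) (hy : L.d j k y = 0) :
    ∃ (z : K.X j) (m : L.X i), K.d j k z = 0 ∧ π • y = f.f j z + L.d i j m := by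
  subst hij hjk
  obtain ⟨x, hx⟩ := hf (L.moduleCatHomologyClass j ⟨y, hy⟩)
  obtain ⟨z, rfl⟩ := K.moduleCatHomologyClass_surjective j x
  have hfz : L.d j (c.next j) (f.f j z) = 0 := by
    rw [Hom.comm_apply, z.2, map_zero]
  rw [homologyMap_moduleCatHomologyClass f z ⟨_, hfz⟩ rfl, ← map_smul, ← sub_eq_zero,
    ← map_sub, moduleCatHomologyClass_eq_zero_iff] at hx
  obtain ⟨m, hm⟩ := hx
  exact ⟨z, m, z.2, eq_add_of_sub_eq' hm.symm⟩

lemma exists_smul_eq_d_of_isPiInjective (hij : c.prev j = i) (hjk : c.next j = k)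
    (hf : ∀ x, homologyMap f j x = 0 → π • x = 0) (z : K.X j) (hz : K.d j k z = 0)
    (m : L.X i) (hm : f.f j z = L.d i j m) : ∃ w : K.X i, π • z = K.d i j w := by
  subst hij hjk
  have hfz : L.d j (c.next j) (f.f j z) = 0 := by
    rw [Hom.comm_apply, hz, map_zero]
  have hclass : homologyMap f j (K.moduleCatHomologyClass j ⟨z, hz⟩) = 0 := by
    rw [homologyMap_moduleCatHomologyClass f _ ⟨_, hfz⟩ rfl, moduleCatHomologyClass_eq_zero_iff]
    exact ⟨m, hm.symm⟩
  have hzero := hf _ hclass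
  rw [← map_smul, moduleCatHomologyClass_eq_zero_iff] at hzero
  obtain ⟨w, hw⟩ := hzero
  exact ⟨w, hw.symm⟩

lemma exists_sq_smul_eq_of_relative_cycle (hij : c.prev j = i) (hjk : c.next j = k)
    (hjk' : c.prev k = j) (hkl : c.next k = l)
    (hinj : ∀ x, homologyMap f k x = 0 → π • x = 0) (hsurj : IsPiSurjective π (homologyMap f j))
    (z : K.X k) (hz : K.d k l z = 0) (s : L.X j) (hs : f.f k z = L.d j k s) :
    ∃ (G : K.X j) (H : L.X i), K.d j k G = π ^ 2 • z ∧ π ^ 2 • s = f.f j G + L.d i j H := by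
  obtain ⟨w, hw⟩ := exists_smul_eq_d_of_isPiInjective f π hjk' hkl hinj z hz s hs
  have hy : L.d j k (π • s - f.f j w) = 0 := by
    rw [map_sub, map_smul, ← hs, Hom.comm_apply, ← hw, map_smul, sub_self]
  obtain ⟨u, m, hu, hum⟩ := exists_smul_eq_add_d_of_isPiSurjective f π hij hjk hsurj _ hy
  refine ⟨π • w + u, m, ?_, ?_⟩
  · rw [map_add, map_smul, ← hw, hu, add_zero, smul_smul, sq]
  · rw [map_add, map_smul]
    linear_combination (norm := module) hum

lemma exists_hom_sq_smul_eq_of_relative_cycle (hij : c.prev j = i) (hjk : c.next j = k)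
    (hjk' : c.prev k = j) (hkl : c.next k = l)
    (hinj : ∀ x, homologyMap f k x = 0 → π • x = 0) (hsurj : IsPiSurjective π (homologyMap f j))
    {P : ModuleCat R} [Module.Projective R P] (Z : P ⟶ K.X k) (S : P ⟶ L.X j)
    (hZ : Z ≫ K.d k l = 0) (hZS : Z ≫ f.f k = S ≫ L.d j k) :
    ∃ (G : P ⟶ K.X j) (H : P ⟶ L.X i),
      G ≫ K.d j k = π ^ 2 • Z ∧ π ^ 2 • S = G ≫ f.f j + H ≫ L.d i j := by
  let T : (K.X j × L.X i) →ₗ[R] (K.X k × L.X j) :=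
    ((K.d j k).hom ∘ₗ LinearMap.fst R _ _).prod ((f.f j).hom.coprod (L.d i j).hom)
  obtain ⟨GH, hGH⟩ := Module.projective_lifting_property_of_range_le T
    ((π ^ 2 • Z).hom.prod (π ^ 2 • S).hom) (by
      rintro _ ⟨x, rfl⟩
      obtain ⟨G, H, hG, hH⟩ := exists_sq_smul_eq_of_relative_cycle f π hij hjk hjk' hkl hinj
        hsurj (Z x) (ConcreteCategory.congr_hom hZ x) (S x) (ConcreteCategory.congr_hom hZS x)
      exact ⟨(G, H), Prod.ext hG hH.symm⟩)
  refine ⟨ModuleCat.ofHom (LinearMap.fst R _ _ ∘ₗ GH),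
    ModuleCat.ofHom (LinearMap.snd R _ _ ∘ₗ GH), ?_, ?_⟩ <;> ext x
  · exact congrArg Prod.fst (LinearMap.congr_fun hGH x)
  · exact (congrArg Prod.snd (LinearMap.congr_fun hGH x)).symm

end HomologicalComplex

namespace CochainComplex

open HomologicalComplex

variable {R : Type*} [CommRing R] {P Q M : CochainComplex (ModuleCat R) ℤ}

/-- The degree-`i` part of "`g` is a chain map `P ⟶ Q` and `h` a homotopy `φ ≃ g ≫ f`"; the
isomorphism identifies `M.X (i + 1 - 1)` with `M.X i`. -/
def IsHomotopyLiftAt (φ : P ⟶ M) (f : Q ⟶ M) (g : ∀ i, P.X i ⟶ Q.X i)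
    (h : ∀ i, P.X i ⟶ M.X (i - 1)) (i : ℤ) : Prop :=
  g i ≫ Q.d i (i + 1) = P.d i (i + 1) ≫ g (i + 1) ∧
    φ.f i = P.d i (i + 1) ≫ h (i + 1) ≫ (M.XIsoOfEq (add_sub_cancel_right i 1)).hom +
      h i ≫ M.d (i - 1) i + g i ≫ f.f i

variable {φ : P ⟶ M} {f : Q ⟶ M} {g : ∀ i, P.X i ⟶ Q.X i} {h : ∀ i, P.X i ⟶ M.X (i - 1)}
  {i : ℤ}

lemma isHomotopyLiftAt_of_isZero (hP : Limits.IsZero (P.X i)) : IsHomotopyLiftAt φ f g h i :=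
  ⟨hP.eq_of_src _ _, hP.eq_of_src _ _⟩

lemma IsHomotopyLiftAt.smul (r : R) (hi : IsHomotopyLiftAt φ f g h i) :
    IsHomotopyLiftAt (r • φ) f (r • g) (r • h) i := by
  obtain ⟨hg, hh⟩ := hi
  refine ⟨?_, ?_⟩
  · simp only [Pi.smul_apply, Linear.smul_comp, Linear.comp_smul, hg]
  · simp only [smul_f_apply, Pi.smul_apply, Linear.smul_comp, Linear.comp_smul, hh, smul_add]

lemma IsHomotopyLiftAt.exists_sq_smul_update (π : R) {k : ℤ} [Module.Projective R (P.X k)]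
    (hinj : ∀ x, homologyMap f (k + 1) x = 0 → π • x = 0)
    (hsurj : IsPiSurjective π (homologyMap f k)) (hk : IsHomotopyLiftAt φ f g h (k + 1)) :
    ∃ G H, IsHomotopyLiftAt (π ^ 2 • φ) f (Function.update (π ^ 2 • g) k G)
      (Function.update (π ^ 2 • h) k H) k := by
  have hZ : (P.d k (k + 1) ≫ g (k + 1)) ≫ Q.d (k + 1) (k + 1 + 1) = 0 := by
    rw [Category.assoc, hk.1, d_comp_d_assoc, Limits.zero_comp]
  have hZS : (P.d k (k + 1) ≫ g (k + 1)) ≫ f.f (k + 1) =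
      (φ.f k - P.d k (k + 1) ≫ h (k + 1) ≫ (M.XIsoOfEq (add_sub_cancel_right k 1)).hom) ≫
        M.d k (k + 1) := by
    have hφ := P.d k (k + 1) ≫= hk.2
    rw [← φ.comm, Preadditive.comp_add, Preadditive.comp_add, d_comp_d_assoc,
      Limits.zero_comp, zero_add] at hφ
    rw [Preadditive.sub_comp, hφ, Category.assoc, Category.assoc, Category.assoc,
      XIsoOfEq_hom_comp_d]
    abel
  obtain ⟨G, H, hG, hH⟩ := exists_hom_sq_smul_eq_of_relative_cycle f π (prev ℤ k) (next ℤ k)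
    (by rw [prev]; omega) (next ℤ (k + 1)) hinj hsurj _ _ hZ hZS
  refine ⟨G, H, ?_, ?_⟩
  · simp only [Function.update_self, Function.update_of_ne (show k + 1 ≠ k by omega), hG,
      Pi.smul_apply, Linear.comp_smul]
  · simp only [Function.update_self, Function.update_of_ne (show k + 1 ≠ k by omega),
      smul_f_apply, Pi.smul_apply, Linear.smul_comp, Linear.comp_smul]
    rw [smul_sub] at hH
    linear_combination (norm := module) hH

lemma exists_isHomotopyLiftAt_sq_smul (π : R) {k : ℤ} [Module.Projective R (P.X k)]
    (hinj : ∀ x, homologyMap f (k + 1) x = 0 → π • x = 0)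
    (hsurj : IsPiSurjective π (homologyMap f k))
    (hgh : ∀ i, k + 1 ≤ i → IsHomotopyLiftAt φ f g h i) :
    ∃ (g' : ∀ i, P.X i ⟶ Q.X i) (h' : ∀ i, P.X i ⟶ M.X (i - 1)),
      ∀ i, k ≤ i → IsHomotopyLiftAt (π ^ 2 • φ) f g' h' i := by
  obtain ⟨G, H, hk⟩ := (hgh (k + 1) le_rfl).exists_sq_smul_update π hinj hsurj
  refine ⟨Function.update (π ^ 2 • g) k G, Function.update (π ^ 2 • h) k H, fun i hi => ?_⟩
  obtain rfl | hi := hi.eq_or_lt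
  · exact hk
  · simpa only [IsHomotopyLiftAt, Function.update_of_ne (show i ≠ k by omega),
      Function.update_of_ne (show i + 1 ≠ k by omega)] using (hgh i hi).smul (π ^ 2)

lemma exists_isHomotopyLiftAt_pow_smul (π : R) {a b : ℤ} [∀ i, Module.Projective R (P.X i)]
    (hzero : ∀ i, b < i → Limits.IsZero (P.X i))
    (hinj : ∀ i, a < i → ∀ x, homologyMap f i x = 0 → π • x = 0)
    (hsurj : ∀ i, a ≤ i → IsPiSurjective π (homologyMap f i)) (n : ℕ) (hn : a ≤ b + 1 - n) :
    ∃ (g : ∀ i, P.X i ⟶ Q.X i) (h : ∀ i, P.X i ⟶ M.X (i - 1)),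
      ∀ i, b + 1 - n ≤ i → IsHomotopyLiftAt (π ^ (2 * n) • φ) f g h i := by
  induction n with
  | zero => exact ⟨0, 0, fun i hi => isHomotopyLiftAt_of_isZero (hzero i (by omega))⟩
  | succ n ih =>
    obtain ⟨g, h, hgh⟩ := ih (by omega)
    obtain ⟨g', h', hgh'⟩ := exists_isHomotopyLiftAt_sq_smul π (k := b - n)
      (hinj _ (by omega)) (hsurj _ (by omega)) fun i hi => hgh i (by omega)
    refine ⟨g', h', fun i hi => ?_⟩
    rw [mul_add_one, pow_add, mul_comm, mul_smul]
    exact hgh' i (by omega)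

lemma exists_homotopy_of_isHomotopyLiftAt (hgh : ∀ i, IsHomotopyLiftAt φ f g h i) :
    ∃ α' : P ⟶ Q, Nonempty (Homotopy φ (α' ≫ f)) := by
  refine ⟨{ f := g, comm' := ?_ }, ⟨?_⟩⟩
  · rintro i _ rfl
    exact (hgh i).1
  · refine
      { hom := fun i j =>
          if hij : j + 1 = i then h i ≫ (M.XIsoOfEq (show i - 1 = j by omega)).hom else 0
        zero := fun i j hij => dif_neg hij
        comm := fun i => ?_ }
    rw [dNext_eq _ (show (ComplexShape.up ℤ).Rel i (i + 1) from rfl),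
      prevD_eq _ (show (ComplexShape.up ℤ).Rel (i - 1) i by simp), dif_pos rfl,
      dif_pos (sub_add_cancel i 1), XIsoOfEq_rfl, Iso.refl_hom, Category.comp_id]
    exact (hgh i).2

end CochainComplex

universe u

/-- **Lemma 4.5.** There is an integer `l ≥ 0` depending only on `b - a` such that: for every
commutative ring `R`, every `π ∈ R`, every morphism `α : M₁^• ⟶ M₂^•` of
`π`-`[a,b]`-pseudo-coherent complexes of `R`-modules, and all given `π`-`[a,b]`-pseudo
resolutions `fᵢ : Pᵢ^• ⟶ Mᵢ^•` (`i = 1, 2`), there is a morphism of complexes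
`α' : P₁^• ⟶ P₂^•` such that `(π^l • α) ∘ f₁` is homotopic to `f₂ ∘ α'`. -/
theorem isPiPseudoResolution_lift :
    ∃ l : ℤ → ℕ, ∀ (a b : ℤ), a ≤ b →
      ∀ (R : Type u) [CommRing R] (π : R) (M₁ M₂ : CochainComplex (ModuleCat R) ℤ)
        (α : M₁ ⟶ M₂),
        IsPiPseudoCoherent π a b M₁ → IsPiPseudoCoherent π a b M₂ →
        ∀ (P₁ P₂ : CochainComplex (ModuleCat R) ℤ) (f₁ : P₁ ⟶ M₁) (f₂ : P₂ ⟶ M₂),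
          IsPiPseudoResolution π a b f₁ → IsPiPseudoResolution π a b f₂ →
          ∃ α' : P₁ ⟶ P₂,
            Nonempty (Homotopy (f₁ ≫ (π ^ l (b - a) • α)) (α' ≫ f₂)) := by
  refine ⟨fun t => 2 * (t + 1).toNat, fun a b hab R _ π M₁ M₂ α _ _ P₁ P₂ f₁ f₂ hf₁ hf₂ => ?_⟩
  obtain ⟨hfree, -, hvanish, -, -⟩ := hf₁
  obtain ⟨-, -, -, hiso, hsurj⟩ := hf₂
  have hzero : ∀ i, i < a ∨ b < i → Limits.IsZero (P₁.X i) := fun i hi =>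
    ModuleCat.isZero_iff_subsingleton.2 ⟨fun x y => (hvanish i hi x).trans (hvanish i hi y).symm⟩
  have hsurj' : ∀ i, a ≤ i → IsPiSurjective π (HomologicalComplex.homologyMap f₂ i) :=
    fun i hi => hi.eq_or_lt.elim (· ▸ hsurj) fun hi => (hiso i hi).2
  obtain ⟨g, h, hgh⟩ := CochainComplex.exists_isHomotopyLiftAt_pow_smul (φ := f₁ ≫ α) π
    (fun i hi => hzero i (.inr hi)) (fun i hi => (hiso i hi).1) hsurj' (b - a + 1).toNat
    (by omega)
  rw [Linear.comp_smul]
  refine CochainComplex.exists_homotopy_of_isHomotopyLiftAt (g := g) (h := h) fun i => ?_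
  by_cases hi : a ≤ i
  · exact hgh i (by omega)
  · exact CochainComplex.isHomotopyLiftAt_of_isZero (hzero i (.inl (by omega)))
end

section
/- Let a ≤ b be integers. There exists an integer l ≥ 0 depending only on b−a such that: for every commutative ring R, every π ∈ R, and every short exact sequence of cochain complexes of R-modules 0 → M_1^• → M_2^• → M_3^• → 0 (exact in each degree), if M_2^• is π-[a−1,b−1]-pseudo-coherent and M_3^• is π-[a−2,b−1]-pseudo-coherent, then M_1^• is π^l-[a−1,b]-pseudo-coherent. -/
open CategoryTheory

universe u

/-!
Put `K = 2 (b - a + 1)`. Since `P₂` is projective and concentrated in `[a - 1, b - 1]`, a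
descending induction over its degrees lifts `π ^ K • (β ∘ f₂)` through `f₃` to a chain map
`c : P₂ ⟶ P₃` up to a homotopy, each degree costing `π ^ 2` (one `π` from the kernel and one
from the cokernel condition on `H(f₃)`). The mapping fibre `P₁` of `c`, with `P₁ʲ = P₂ʲ × P₃ʲ⁻¹`,
is finite free and concentrated in `[a - 1, b]`. Lifting `f₃` and the homotopy through `β`, and
the resulting defects through `α`, gives a comparison map `P₁ ⟶ M₁`; a diagram chase in the
short exact sequence shows that it is a `π ^ (K + 3)`-pseudo resolution.
-/

section Development

variable {R : Type*} [CommRing R]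

theorem Module.exists_lift_of_forall_mem_range {P M N : Type*} [AddCommGroup P] [Module R P]
    [Module.Projective R P] [AddCommGroup M] [Module R M] [AddCommGroup N] [Module R N]
    (g : M →ₗ[R] N) (u : P →ₗ[R] N) (h : ∀ x, u x ∈ LinearMap.range g) :
    ∃ v : P →ₗ[R] M, ∀ x, g (v x) = u x := by
  obtain ⟨v, hv⟩ := Module.projective_lifting_property g.rangeRestrict
    (u.codRestrict _ h) g.surjective_rangeRestrict
  exact ⟨v, fun x => congr(Subtype.val $(LinearMap.congr_fun hv x))⟩

namespace HomologicalComplex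

variable {ι : Type*} {c : ComplexShape ι}

@[simp]
lemma d_comp_d_apply (X : HomologicalComplex (ModuleCat R) c) (i j k : ι) (x : X.X i) :
    X.d j k (X.d i j x) = 0 := by
  simp [← ConcreteCategory.comp_apply]

lemma Hom.comm_apply_s13 {X Y : HomologicalComplex (ModuleCat R) c} (f : X ⟶ Y) (i j : ι)
    (x : X.X i) : Y.d i j (f.f i x) = f.f j (X.d i j x) := by
  simp only [← ConcreteCategory.comp_apply, f.comm]

@[simp]
lemma XIsoOfEq_hom_d_apply (X : HomologicalComplex (ModuleCat R) c) {i j : ι} (h : i = j) (k : ι)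
    (x : X.X i) : X.d j k ((X.XIsoOfEq h).hom x) = X.d i k x := by
  subst h; simp

@[simp]
lemma d_XIsoOfEq_hom_apply (X : HomologicalComplex (ModuleCat R) c) {j k : ι} (h : j = k) (i : ι)
    (x : X.X i) : (X.XIsoOfEq h).hom (X.d i j x) = X.d i k x := by
  subst h; simp

end HomologicalComplex

namespace CochainComplex

open HomologicalComplex

section Cocycles

variable {K : CochainComplex (ModuleCat R) ℤ}

lemma iCycles_injective (j : ℤ) : Function.Injective (K.iCycles j) :=
  (ModuleCat.mono_iff_injective _).1 inferInstance

lemma homologyπ_surjective (j : ℤ) : Function.Surjective (K.homologyπ j) :=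
  (ModuleCat.epi_iff_surjective _).1 inferInstance

lemma exists_iCycles_eq {j k : ℤ} (hk : j + 1 = k) (x : K.X j) (hx : K.d j k x = 0) :
    ∃ z : K.cycles j, K.iCycles j z = x :=
  (ShortComplex.moduleCat_exact_iff _).1 (ShortComplex.exact_of_f_is_kernel
    (ShortComplex.mk _ _ (K.iCycles_d j k)) (K.cyclesIsKernel j k (by simp [hk]))) x hx

lemma homologyπ_eq_zero_iff {i j : ℤ} (hi : i + 1 = j) (z : K.cycles j) :
    K.homologyπ j z = 0 ↔ ∃ w : K.X i, K.d i j w = K.iCycles j z := by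
  constructor
  · intro hz
    obtain ⟨w, rfl⟩ := (ShortComplex.moduleCat_exact_iff _).1
      (ShortComplex.exact_of_g_is_cokernel (ShortComplex.mk _ _ (K.toCycles_comp_homologyπ i j))
        (K.homologyIsCokernel i j (by simp [← hi]))) z hz
    exact ⟨w, by simp [← ConcreteCategory.comp_apply]⟩
  · rintro ⟨w, hw⟩
    obtain rfl : K.toCycles i j w = z :=
      iCycles_injective j (by simp [← ConcreteCategory.comp_apply, hw])
    simp [← ConcreteCategory.comp_apply]

end Cocycles

section PiConditions

variable {X Y : CochainComplex (ModuleCat R) ℤ}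

-- The auxiliary indices `i = j - 1`, `k = j + 1` are quantified over to avoid transport along
-- `j - 1 + 1 = j`.
def PiInjectiveOnCocycles (π : R) (f : X ⟶ Y) (j : ℤ) : Prop :=
  ∀ i k : ℤ, i + 1 = j → j + 1 = k → ∀ x : X.X j, X.d j k x = 0 →
    (∃ w : Y.X i, f.f j x = Y.d i j w) → ∃ v : X.X i, π • x = X.d i j v

def PiSurjectiveOnCocycles (π : R) (f : X ⟶ Y) (j : ℤ) : Prop :=
  ∀ i k : ℤ, i + 1 = j → j + 1 = k → ∀ y : Y.X j, Y.d j k y = 0 →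
    ∃ x : X.X j, X.d j k x = 0 ∧ ∃ w : Y.X i, π • y = f.f j x + Y.d i j w

variable (π : R) (f : X ⟶ Y) (j : ℤ)

lemma homologyπ_homologyMap (z : X.cycles j) :
    homologyMap f j (X.homologyπ j z) =
      Y.homologyπ j (cyclesMap f j z) := by
  simpa only [ConcreteCategory.comp_apply] using
    ConcreteCategory.congr_hom (homologyπ_naturality f j) z

lemma iCycles_cyclesMap (z : X.cycles j) :
    Y.iCycles j (cyclesMap f j z) = f.f j (X.iCycles j z) := by
  simpa only [ConcreteCategory.comp_apply] using
    ConcreteCategory.congr_hom (cyclesMap_i f j) z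

lemma isPiSurjective_homologyMap_iff :
    IsPiSurjective π (homologyMap f j) ↔ PiSurjectiveOnCocycles π f j := by
  constructor
  · intro hf i k hi hk y hy
    obtain ⟨z, rfl⟩ := exists_iCycles_eq hk y hy
    obtain ⟨h, hh⟩ := hf (Y.homologyπ j z)
    obtain ⟨x, rfl⟩ := homologyπ_surjective j h
    rw [homologyπ_homologyMap, ← map_smul, ← sub_eq_zero, ← map_sub,
      homologyπ_eq_zero_iff hi] at hh
    obtain ⟨w, hw⟩ := hh
    refine ⟨X.iCycles j x, by simp [← ConcreteCategory.comp_apply], w, ?_⟩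
    rw [hw, map_sub, iCycles_cyclesMap, map_smul]
    abel
  · intro hf h
    obtain ⟨z, rfl⟩ := homologyπ_surjective j h
    obtain ⟨x, hx, w, hw⟩ := hf (j - 1) (j + 1) (by omega) rfl (Y.iCycles j z)
      (by simp [← ConcreteCategory.comp_apply])
    obtain ⟨x, rfl⟩ := exists_iCycles_eq rfl x hx
    refine ⟨X.homologyπ j x, ?_⟩
    rw [homologyπ_homologyMap, ← map_smul, ← sub_eq_zero, ← map_sub,
      homologyπ_eq_zero_iff (show j - 1 + 1 = j by omega)]
    exact ⟨w, by rw [map_sub, iCycles_cyclesMap, map_smul, hw]; abel⟩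

lemma annihilates_ker_homologyMap_iff :
    (∀ h, homologyMap f j h = 0 → π • h = 0) ↔
      PiInjectiveOnCocycles π f j := by
  constructor
  · intro hf i k hi hk x hx ⟨w, hw⟩
    obtain ⟨z, rfl⟩ := exists_iCycles_eq hk x hx
    have h0 := hf (X.homologyπ j z) (by
      rw [homologyπ_homologyMap, homologyπ_eq_zero_iff hi, iCycles_cyclesMap]
      exact ⟨w, hw.symm⟩)
    rw [← map_smul, homologyπ_eq_zero_iff hi] at h0
    obtain ⟨v, hv⟩ := h0
    exact ⟨v, by rw [hv, map_smul]⟩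
  · intro hf h hh
    obtain ⟨z, rfl⟩ := homologyπ_surjective j h
    rw [homologyπ_homologyMap, homologyπ_eq_zero_iff (show j - 1 + 1 = j by omega),
      iCycles_cyclesMap] at hh
    obtain ⟨w, hw⟩ := hh
    obtain ⟨v, hv⟩ := hf (j - 1) (j + 1) (by omega) rfl _
      (by simp [← ConcreteCategory.comp_apply]) ⟨w, hw.symm⟩
    rw [← map_smul, homologyπ_eq_zero_iff (show j - 1 + 1 = j by omega), map_smul]
    exact ⟨v, hv.symm⟩

lemma isPiIsomorphism_homologyMap_iff :
    IsPiIsomorphism π (homologyMap f j) ↔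
      PiInjectiveOnCocycles π f j ∧ PiSurjectiveOnCocycles π f j :=
  and_congr (annihilates_ker_homologyMap_iff π f j) (isPiSurjective_homologyMap_iff π f j)

variable {π f j}

lemma _root_.IsPiPseudoResolution.piInjectiveOnCocycles {a b : ℤ}
    (h : IsPiPseudoResolution π a b f) (hj : a < j) : PiInjectiveOnCocycles π f j :=
  ((isPiIsomorphism_homologyMap_iff π f j).1 (h.2.2.2.1 j hj)).1

lemma _root_.IsPiPseudoResolution.piSurjectiveOnCocycles {a b : ℤ}
    (h : IsPiPseudoResolution π a b f) (hj : a ≤ j) : PiSurjectiveOnCocycles π f j := by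
  obtain rfl | hj := hj.eq_or_lt
  · exact (isPiSurjective_homologyMap_iff π f _).1 h.2.2.2.2
  · exact ((isPiIsomorphism_homologyMap_iff π f j).1 (h.2.2.2.1 j hj)).2

lemma PiInjectiveOnCocycles.exists_d_eq_of_map_eq_d (hker : PiInjectiveOnCocycles π f j)
    (hsurj : PiSurjectiveOnCocycles π f (j - 1)) {x : X.X j} (hx : X.d j (j + 1) x = 0)
    {m : Y.X (j - 1)} (hm : f.f j x = Y.d (j - 1) j m) :
    ∃ (x' : X.X (j - 1)) (w : Y.X (j - 1 - 1)),
      X.d (j - 1) j x' = π ^ 2 • x ∧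
        f.f (j - 1) x' = π ^ 2 • m + Y.d (j - 1 - 1) (j - 1) w := by
  obtain ⟨x₁, hx₁⟩ := hker (j - 1) (j + 1) (by omega) rfl x hx ⟨m, hm⟩
  have hcyc : Y.d (j - 1) j (f.f (j - 1) x₁ - π • m) = 0 := by
    rw [map_sub, map_smul, Hom.comm_apply_s13, ← hx₁, map_smul, hm, sub_self]
  obtain ⟨x₂, hx₂, w, hw⟩ := hsurj (j - 1 - 1) j (by omega) (by omega) _ hcyc
  refine ⟨π • x₁ - x₂, w, ?_, ?_⟩
  · rw [map_sub, map_smul, ← hx₁, hx₂, sub_zero, smul_smul, pow_two]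
  · rw [map_sub, map_smul]
    linear_combination (norm := module) hw

end PiConditions

section LiftUpToHomotopy

variable {P Q M : CochainComplex (ModuleCat R) ℤ} (u : P ⟶ M) (f : Q ⟶ M)

structure IsLiftUpToHomotopy (r : R) (m : ℤ) (c : ∀ j, P.X j →ₗ[R] Q.X j)
    (s : ∀ i j, P.X j →ₗ[R] M.X i) : Prop where
  comm : ∀ j k, j + 1 = k → m ≤ j → ∀ x, Q.d j k (c j x) = c k (P.d j k x)
  homotopy : ∀ i j k, i + 1 = j → j + 1 = k → m ≤ j → ∀ x : P.X j,
    f.f j (c j x) = r • u.f j x + M.d i j (s i j x) + s j k (P.d j k x)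

variable {u f}

lemma IsLiftUpToHomotopy.exists_extend {π r : R} {m : ℤ} {c : ∀ j, P.X j →ₗ[R] Q.X j}
    {s : ∀ i j, P.X j →ₗ[R] M.X i} (h : IsLiftUpToHomotopy u f r (m + 1) c s)
    [Module.Projective R (P.X m)]
    (hker : PiInjectiveOnCocycles π f (m + 1)) (hsurj : PiSurjectiveOnCocycles π f m) :
    ∃ (c₀ : P.X m →ₗ[R] Q.X m) (s₀ : P.X m →ₗ[R] M.X (m - 1)),
      (∀ x, Q.d m (m + 1) (c₀ x) = π ^ 2 • c (m + 1) (P.d m (m + 1) x)) ∧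
      (∀ x, f.f m (c₀ x) = (π ^ 2 * r) • u.f m x + M.d (m - 1) m (s₀ x)
        + π ^ 2 • s m (m + 1) (P.d m (m + 1) x)) := by
  let dP : P.X m →ₗ[R] P.X (m + 1) := (P.d m (m + 1)).hom
  let z : P.X m →ₗ[R] M.X m := r • (u.f m).hom + s m (m + 1) ∘ₗ dP
  -- `c (d x)` is a cocycle with `f (c (d x)) = d (z x)`, so `π • c (d x) = d (q x)`
  have hw : ∀ x, Q.d (m + 1) (m + 2) (c (m + 1) (dP x)) = 0 := fun x => by
    simp [dP, h.comm (m + 1) (m + 2) (by omega) (by omega)]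
  have hfw : ∀ x, f.f (m + 1) (c (m + 1) (dP x)) = M.d m (m + 1) (z x) := fun x => by
    simp [dP, z, h.homotopy m (m + 1) (m + 2) rfl (by omega) le_rfl, Hom.comm_apply_s13]
  obtain ⟨q, hq⟩ := Module.exists_lift_of_forall_mem_range (Q.d m (m + 1)).hom
    (π • c (m + 1) ∘ₗ dP) fun x => by
      obtain ⟨v, hv⟩ := hker m (m + 2) rfl (by omega) _ (hw x) ⟨_, hfw x⟩
      exact ⟨v, hv.symm⟩
  replace hq : ∀ x, Q.d m (m + 1) (q x) = π • c (m + 1) (dP x) := hq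
  -- then `y := π z - f q` is a cocycle, which `f` hits up to `π` and a coboundary
  let y : P.X m →ₗ[R] M.X m := π • z - (f.f m).hom ∘ₗ q
  have hy : ∀ x, M.d m (m + 1) (y x) = 0 := fun x => by
    simp [y, Hom.comm_apply_s13, hq, hfw]
  obtain ⟨pn, hpn⟩ := Module.exists_lift_of_forall_mem_range
    (((Q.d m (m + 1)).hom ∘ₗ LinearMap.fst R _ _).prod
      ((f.f m).hom ∘ₗ LinearMap.fst R _ _ + (M.d (m - 1) m).hom ∘ₗ LinearMap.snd R _ _))
    ((0 : P.X m →ₗ[R] Q.X (m + 1)).prod (π • y)) fun x => by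
      obtain ⟨p, hp, n, hn⟩ := hsurj (m - 1) (m + 1) (by omega) rfl (y x) (hy x)
      exact ⟨(p, n), Prod.ext (by simpa using hp) (by simpa using hn.symm)⟩
  have hp : ∀ x, Q.d m (m + 1) (pn x).1 = 0 := fun x => congr(Prod.fst $(hpn x))
  have hn : ∀ x, f.f m (pn x).1 + M.d (m - 1) m (pn x).2 =
      π • (π • (r • u.f m x + s m (m + 1) (P.d m (m + 1) x)) - f.f m (q x)) :=
    fun x => congr(Prod.snd $(hpn x))
  refine ⟨π • q + LinearMap.fst R _ _ ∘ₗ pn, -(LinearMap.snd R _ _ ∘ₗ pn),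
    fun x => ?_, fun x => ?_⟩
  · change Q.d m (m + 1) (π • q x + (pn x).1) = _
    rw [map_add, map_smul, hq, hp, add_zero, smul_smul, pow_two]
  · change f.f m (π • q x + (pn x).1) = _ + M.d (m - 1) m (-(pn x).2) + _
    rw [map_add, map_smul, map_neg]
    linear_combination (norm := module) hn x

lemma IsLiftUpToHomotopy.extend {π r : R} {m : ℤ} {c : ∀ j, P.X j →ₗ[R] Q.X j}
    {s : ∀ i j, P.X j →ₗ[R] M.X i} (h : IsLiftUpToHomotopy u f r (m + 1) c s)
    [Module.Projective R (P.X m)]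
    (hker : PiInjectiveOnCocycles π f (m + 1)) (hsurj : PiSurjectiveOnCocycles π f m) :
    ∃ c' s', IsLiftUpToHomotopy u f (π ^ 2 * r) m c' s' := by
  obtain ⟨c₀, s₀, hc₀, hs₀⟩ := h.exists_extend hker hsurj
  refine ⟨Function.update (fun j => π ^ 2 • c j) m c₀,
    Function.update (fun i j => π ^ 2 • s i j) (m - 1)
      (Function.update (fun j => π ^ 2 • s (m - 1) j) m s₀), ⟨?_, ?_⟩⟩
  · rintro j k rfl hj x
    obtain rfl | hjm := eq_or_ne j m
    · simpa using hc₀ x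
    · simp [hjm, Function.update_of_ne (show j + 1 ≠ m by omega),
        h.comm j (j + 1) rfl (by omega)]
  · intro i j k hi hk hj x
    obtain rfl : i = j - 1 := by omega
    obtain rfl : k = j + 1 := by omega
    obtain rfl | hjm := eq_or_ne j m
    · simpa [Function.update_of_ne (show j ≠ j - 1 by omega)] using hs₀ x
    · simp [hjm, Function.update_of_ne (show j ≠ m - 1 by omega),
        h.homotopy (j - 1) j (j + 1) hi rfl (by omega) x, smul_smul, pow_two]

variable (u f)

lemma exists_isLiftUpToHomotopy (π : R) {m b : ℤ} [∀ j, Module.Projective R (P.X j)]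
    (htop : ∀ j, b ≤ j → ∀ x : P.X j, x = 0)
    (hker : ∀ j, m < j → PiInjectiveOnCocycles π f j)
    (hsurj : ∀ j, m ≤ j → PiSurjectiveOnCocycles π f j) :
    ∀ n : ℕ, m ≤ b - n → ∃ c s, IsLiftUpToHomotopy u f (π ^ (2 * n)) (b - n) c s
  | 0, _ => ⟨0, 0, ⟨fun j _ _ hj x => by simp [htop j (by omega) x],
      fun _ j _ _ _ hj x => by simp [htop j (by omega) x]⟩⟩
  | n + 1, hn => by
    obtain ⟨c, s, h⟩ := exists_isLiftUpToHomotopy π htop hker hsurj n (by omega)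
    obtain ⟨c', s', h'⟩ := (show IsLiftUpToHomotopy u f _ (b - (n + 1 : ℕ) + 1) c s by
      convert h using 2; push_cast; ring).extend (hker _ (by omega)) (hsurj _ (by omega))
    exact ⟨c', s', by convert h' using 1; ring⟩

lemma exists_hom_lift_up_to_homotopy (π : R) {m b : ℤ} (hmb : m ≤ b)
    [∀ j, Module.Projective R (P.X j)]
    (hsupp : ∀ j, j < m ∨ b ≤ j → ∀ x : P.X j, x = 0)
    (hker : ∀ j, m < j → PiInjectiveOnCocycles π f j)
    (hsurj : ∀ j, m ≤ j → PiSurjectiveOnCocycles π f j) :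
    ∃ (c : P ⟶ Q) (s : ∀ i j, P.X j →ₗ[R] M.X i),
      ∀ i j k, i + 1 = j → j + 1 = k → ∀ x,
        f.f j (c.f j x) = π ^ (2 * (b - m).toNat) • u.f j x + M.d i j (s i j x)
          + s j k (P.d j k x) := by
  obtain ⟨c, s, h⟩ := exists_isLiftUpToHomotopy u f π (fun j hj => hsupp j (.inr hj)) hker
    hsurj (b - m).toNat (by omega)
  have hlow : ∀ j, j < b - (b - m).toNat → ∀ x : P.X j, x = 0 :=
    fun j hj => hsupp j (.inl (by omega))
  refine ⟨{ f j := ModuleCat.ofHom (c j), comm' j k hjk := ?_ }, s, fun i j k hi hk x => ?_⟩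
  · ext x
    by_cases hj : b - (b - m).toNat ≤ j
    · simpa using h.comm j k hjk hj x
    · simp [hlow j (by omega) x]
  · by_cases hj : b - (b - m).toNat ≤ j
    · exact h.homotopy i j k hi hk hj x
    · simp [hlow j (by omega) x]

end LiftUpToHomotopy

section MappingFiber

variable {P Q M : CochainComplex (ModuleCat R) ℤ} (c : P ⟶ Q)

-- The mapping cone of `c` shifted by `-1`, with `d (x, y) = (d x, c x - d y)` on `Pʲ × Qʲ⁻¹`.
noncomputable def mappingFiber : CochainComplex (ModuleCat R) ℤ where
  X j := ModuleCat.of R (P.X j × Q.X (j - 1))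
  d j k := if h : j + 1 = k then ModuleCat.ofHom
      (((P.d j k).hom ∘ₗ LinearMap.fst R _ _).prod
        ((Q.XIsoOfEq (show j = k - 1 by omega)).hom.hom ∘ₗ (c.f j).hom ∘ₗ
            LinearMap.fst R _ _ - (Q.d (j - 1) (k - 1)).hom ∘ₗ LinearMap.snd R _ _))
    else 0
  shape j k h := dif_neg h
  d_comp_d' := by
    rintro j _ _ rfl rfl
    ext x <;> simp [← Hom.comm_apply_s13]

lemma mappingFiber_d_apply {j k : ℤ} (h : j + 1 = k) (x : P.X j) (y : Q.X (j - 1)) :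
    (mappingFiber c).d j k ((x, y) : P.X j × Q.X (j - 1)) =
      ((P.d j k x, (Q.XIsoOfEq (show j = k - 1 by omega)).hom (c.f j x) - Q.d (j - 1) (k - 1) y) :
        P.X k × Q.X (k - 1)) := by
  subst h
  dsimp only [mappingFiber]
  rw [dif_pos rfl]
  rfl

lemma mappingFiber_d_eq_zero_iff {j k : ℤ} (h : j + 1 = k) (x : P.X j) (y : Q.X (j - 1)) :
    (mappingFiber c).d j k ((x, y) : P.X j × Q.X (j - 1)) = 0 ↔
      P.d j k x = 0 ∧ c.f j x = Q.d (j - 1) j y := by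
  subst h
  have hj : j = j + 1 - 1 := by omega
  rw [mappingFiber_d_apply c rfl]
  change ((_, _) : P.X (j + 1) × Q.X (j + 1 - 1)) = (0, 0) ↔ _
  rw [Prod.mk.injEq, ← Q.d_XIsoOfEq_hom_apply hj, sub_eq_zero,
    ((ModuleCat.mono_iff_injective (Q.XIsoOfEq hj).hom).1 inferInstance).eq_iff]

noncomputable def mappingFiberDesc (η : ∀ j, P.X j →ₗ[R] M.X j)
    (θ : ∀ i j, Q.X i →ₗ[R] M.X j)
    (hη : ∀ j k, j + 1 = k → ∀ x, η k (P.d j k x) = M.d j k (η j x) + θ j k (c.f j x))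
    (hθ : ∀ i j k, i + 1 = j → j + 1 = k → ∀ y, θ j k (Q.d i j y) = -M.d j k (θ i j y)) :
    mappingFiber c ⟶ M where
  f j := ModuleCat.ofHom (η j ∘ₗ LinearMap.fst R _ _ - θ (j - 1) j ∘ₗ LinearMap.snd R _ _)
  comm' j k hjk := by
    replace hjk : j + 1 = k := hjk
    ext ⟨x, y⟩
    have hθc : ∀ i (h : j = i), θ i k ((Q.XIsoOfEq h).hom (c.f j x)) = θ j k (c.f j x) := by
      rintro _ rfl; simp
    have hθd := hθ (j - 1) (k - 1) k (by omega) (by omega) y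
    rw [congrArg (fun i => M.d i k (θ (j - 1) i y)) (show k - 1 = j by omega)] at hθd
    change M.d j k (η j x - θ (j - 1) j y) =
      η k ((mappingFiber c).d j k ((x, y) : P.X j × Q.X (j - 1))).1 -
        θ (k - 1) k ((mappingFiber c).d j k ((x, y) : P.X j × Q.X (j - 1))).2
    simp only [map_sub, mappingFiber_d_apply c hjk, hη j k hjk, hθc, hθd, sub_neg_eq_add]
    abel

end MappingFiber

section FiberComparison

variable {M₁ M₂ M₃ P₂ P₃ : CochainComplex (ModuleCat R) ℤ}
  (α : M₁ ⟶ M₂) (β : M₂ ⟶ M₃) (f₂ : P₂ ⟶ M₂) (f₃ : P₃ ⟶ M₃)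

-- Data of the comparison map `(x, y) ↦ η x - θ y` from `mappingFiber c` to `M₁` (`toHom`):
-- `t` lifts `f₃` through `β`, `θ` lifts the failure of `t` to commute with `d`, and `η` lifts
-- `r • f₂ - t ∘ c` corrected by the homotopy `[d, σ]`.
structure FiberComparisonData (r : R) where
  c : P₂ ⟶ P₃
  t : ∀ j, P₃.X j →ₗ[R] M₂.X j
  σ : ∀ i j, P₂.X j →ₗ[R] M₂.X i
  η : ∀ j, P₂.X j →ₗ[R] M₁.X j
  θ : ∀ i j, P₃.X i →ₗ[R] M₁.X j
  β_t : ∀ j x, β.f j (t j x) = f₃.f j x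
  α_θ : ∀ i j x, α.f j (θ i j x) = M₂.d i j (t i x) - t j (P₃.d i j x)
  α_η : ∀ i j k, i + 1 = j → j + 1 = k → ∀ x, α.f j (η j x) =
    r • f₂.f j x + M₂.d i j (σ i j x) + σ j k (P₂.d j k x) - t j (c.f j x)

variable {α β f₂ f₃}

lemma FiberComparisonData.exists_of_homotopy {r : R} [∀ j, Module.Projective R (P₂.X j)]
    [∀ j, Module.Projective R (P₃.X j)]
    (hexact : ∀ i, Function.Exact (α.f i) (β.f i)) (hβ : ∀ i, Function.Surjective (β.f i))
    (c : P₂ ⟶ P₃) (s : ∀ i j, P₂.X j →ₗ[R] M₃.X i)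
    (hs : ∀ i j k, i + 1 = j → j + 1 = k → ∀ x, f₃.f j (c.f j x) =
      r • (f₂ ≫ β).f j x + M₃.d i j (s i j x) + s j k (P₂.d j k x)) :
    ∃ D : FiberComparisonData α β f₂ f₃ r, D.c = c := by
  have hα_range : ∀ i {y}, β.f i y = 0 → y ∈ LinearMap.range (α.f i).hom :=
    fun i y hy => (hexact i y).1 hy
  choose t ht using fun j => Module.projective_lifting_property (β.f j).hom (f₃.f j).hom (hβ j)
  have ht' : ∀ j x, β.f j (t j x) = f₃.f j x := fun j x => LinearMap.congr_fun (ht j) x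
  choose σ hσ using fun i j => Module.projective_lifting_property (β.f i).hom (s i j) (hβ i)
  have hσ' : ∀ i j x, β.f i (σ i j x) = s i j x := fun i j x => LinearMap.congr_fun (hσ i j) x
  choose θ hθ using fun i j => Module.exists_lift_of_forall_mem_range (α.f j).hom
    ((M₂.d i j).hom ∘ₗ t i - t j ∘ₗ (P₃.d i j).hom) fun x => hα_range j (by
      change β.f j (M₂.d i j (t i x) - t j (P₃.d i j x)) = 0
      rw [map_sub, ← Hom.comm_apply_s13, ht', ht', Hom.comm_apply_s13, sub_self])
  choose η hη using fun j => Module.exists_lift_of_forall_mem_range (α.f j).hom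
    (r • (f₂.f j).hom + (M₂.d (j - 1) j).hom ∘ₗ σ (j - 1) j
      + σ j (j + 1) ∘ₗ (P₂.d j (j + 1)).hom - t j ∘ₗ (c.f j).hom)
      fun x => hα_range j (by
      change β.f j (r • f₂.f j x + M₂.d (j - 1) j (σ (j - 1) j x)
        + σ j (j + 1) (P₂.d j (j + 1) x) - t j (c.f j x)) = 0
      simp only [map_add, map_sub, map_smul, ← Hom.comm_apply_s13, ht', hσ',
        hs (j - 1) j (j + 1) (by omega) rfl x]
      simp)
  refine ⟨⟨c, t, σ, η, θ, ht', fun i j x => by simpa using hθ i j x, ?_⟩, rfl⟩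
  intro i j k hi hk x
  obtain rfl : i = j - 1 := by omega
  obtain rfl : k = j + 1 := by omega
  simpa using hη j x

namespace FiberComparisonData

variable {r : R} (D : FiberComparisonData α β f₂ f₃ r)

lemma f₃_c (hexact : ∀ i, Function.Exact (α.f i) (β.f i)) {i j k : ℤ} (hi : i + 1 = j)
    (hk : j + 1 = k) (x : P₂.X j) :
    f₃.f j (D.c.f j x) =
      β.f j (r • f₂.f j x + M₂.d i j (D.σ i j x) + D.σ j k (P₂.d j k x)) := by
  have := congrArg (β.f j) (D.α_η i j k hi hk x)
  rw [(hexact j).apply_apply_eq_zero, map_sub, D.β_t] at this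
  exact (sub_eq_zero.1 this.symm).symm

lemma θ_d (hα : ∀ i, Function.Injective (α.f i)) {i j k : ℤ} (y : P₃.X i) :
    D.θ j k (P₃.d i j y) = -M₁.d j k (D.θ i j y) := by
  apply hα k
  simp [D.α_θ, ← Hom.comm_apply_s13]

lemma η_d (hα : ∀ i, Function.Injective (α.f i)) {j k : ℤ} (hk : j + 1 = k) (x : P₂.X j) :
    D.η k (P₂.d j k x) = M₁.d j k (D.η j x) + D.θ j k (D.c.f j x) := by
  apply hα k
  simp [D.α_θ, D.α_η (j - 1) j k (by omega) hk, D.α_η j k (k + 1) hk rfl, ← Hom.comm_apply_s13]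

noncomputable def toHom (hα : ∀ i, Function.Injective (α.f i)) : mappingFiber D.c ⟶ M₁ :=
  mappingFiberDesc D.c D.η D.θ (fun _ _ hk => D.η_d hα hk) fun _ _ _ _ _ => D.θ_d hα

lemma map_smul_eq_d_of_toHom_eq_d (hα : ∀ i, Function.Injective (α.f i)) {j : ℤ}
    {x : P₂.X j} {y : P₃.X (j - 1)} (hx : P₂.d j (j + 1) x = 0)
    (hy : D.c.f j x = P₃.d (j - 1) j y) {w : M₁.X (j - 1)}
    (hw : (D.toHom hα).f j ((x, y) : P₂.X j × P₃.X (j - 1)) = M₁.d (j - 1) j w) :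
    f₂.f j (r • x) = M₂.d (j - 1) j (α.f (j - 1) w - D.σ (j - 1) j x + D.t (j - 1) y) := by
  have h := congrArg (α.f j) hw
  change α.f j (D.η j x - D.θ (j - 1) j y) = _ at h
  simp only [map_sub, D.α_η (j - 1) j (j + 1) (by omega) rfl, D.α_θ, hx, hy, map_zero,
    add_zero, ← Hom.comm_apply_s13] at h
  simp only [map_add, map_sub, map_smul]
  linear_combination (norm := module) h

lemma piInjectiveOnCocycles_toHom (hα : ∀ i, Function.Injective (α.f i))
    (hexact : ∀ i, Function.Exact (α.f i) (β.f i)) {π : R} {j : ℤ}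
    (hf₂ker : PiInjectiveOnCocycles π f₂ j)
    (hf₂surj : PiSurjectiveOnCocycles π f₂ (j - 1))
    (hf₃ker : PiInjectiveOnCocycles π f₃ (j - 1)) :
    PiInjectiveOnCocycles (π ^ 3 * r) (D.toHom hα) j := by
  rintro i k hi hk ⟨x, y⟩ hxy ⟨w, hw⟩
  obtain rfl : i = j - 1 := by omega
  obtain rfl : k = j + 1 := hk.symm
  obtain ⟨hx, hy⟩ := (mappingFiber_d_eq_zero_iff D.c rfl x y).1 hxy
  let m : M₂.X (j - 1) := α.f (j - 1) w - D.σ (j - 1) j x + D.t (j - 1) y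
  have hm : f₂.f j (r • x) = M₂.d (j - 1) j m := D.map_smul_eq_d_of_toHom_eq_d hα hx hy hw
  obtain ⟨x', w', hdx', hfx'⟩ := hf₂ker.exists_d_eq_of_map_eq_d hf₂surj
    (by rw [map_smul, hx, smul_zero]) hm
  let z : P₃.X (j - 1) := (π ^ 2 * r) • y - D.c.f (j - 1) x'
  have hz : P₃.d (j - 1) j z = 0 := by
    simp [z, Hom.comm_apply_s13, hdx', ← hy, smul_smul, mul_comm]
  have hfz : f₃.f (j - 1) z = M₃.d (j - 1 - 1) (j - 1)
      (-(r • β.f _ w' + β.f _ (D.σ (j - 1 - 1) (j - 1) x'))) := by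
    simp only [z, map_sub, map_smul, D.f₃_c hexact (show j - 1 - 1 + 1 = j - 1 by omega)
      (show j - 1 + 1 = j by omega), hfx', hdx', m, map_add, map_neg, ← Hom.comm_apply_s13,
      (hexact _).apply_apply_eq_zero, D.β_t]
    module
  obtain ⟨y₁, hy₁⟩ := hf₃ker (j - 1 - 1) j (by omega) (by omega) z hz ⟨_, hfz⟩
  refine ⟨((π • x', -y₁) : P₂.X (j - 1) × P₃.X (j - 1 - 1)), ?_⟩
  rw [mappingFiber_d_apply D.c (by omega)]
  refine Prod.ext ?_ ?_
  · change (π ^ 3 * r) • x = P₂.d (j - 1) j (π • x')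
    rw [map_smul, hdx']
    module
  · change (π ^ 3 * r) • y = _ - _
    simp only [XIsoOfEq_rfl, Iso.refl_hom, ModuleCat.id_apply, map_smul, map_neg,
      sub_neg_eq_add, ← hy₁, z]
    module

lemma exists_cocycle_α_toHom_eq (hα : ∀ i, Function.Injective (α.f i))
    (hexact : ∀ i, Function.Exact (α.f i) (β.f i)) {π : R} {j : ℤ}
    (hf₂surj : PiSurjectiveOnCocycles π f₂ j) (hf₃ker : PiInjectiveOnCocycles π f₃ j)
    {m : M₁.X j} (hm : M₁.d j (j + 1) m = 0) :
    ∃ (ξ : (mappingFiber D.c).X j) (n : M₂.X (j - 1)),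
      (mappingFiber D.c).d j (j + 1) ξ = 0 ∧
      α.f j ((D.toHom hα).f j ξ) = α.f j ((π ^ 2 * r) • m) + M₂.d (j - 1) j n := by
  obtain ⟨x, hx, w, hw⟩ := hf₂surj (j - 1) (j + 1) (by omega) rfl (α.f j m)
    (by rw [Hom.comm_apply_s13, hm, map_zero])
  have hfcx :
      f₃.f j (D.c.f j x) = M₃.d (j - 1) j (β.f _ (D.σ (j - 1) j x) - r • β.f _ w) := by
    rw [D.f₃_c hexact (show j - 1 + 1 = j by omega) rfl, hx, map_zero, add_zero,
      eq_sub_of_add_eq hw.symm]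
    simp only [map_add, map_sub, map_smul, ← Hom.comm_apply_s13, (hexact _).apply_apply_eq_zero]
    module
  obtain ⟨v, hv⟩ := hf₃ker (j - 1) (j + 1) (by omega) rfl (D.c.f j x)
    (by rw [Hom.comm_apply_s13, hx, map_zero]) ⟨_, hfcx⟩
  refine ⟨((π • x, v) : P₂.X j × P₃.X (j - 1)),
    π • D.σ (j - 1) j x - (π * r) • w - D.t (j - 1) v,
    (mappingFiber_d_eq_zero_iff D.c rfl _ _).2 ⟨by rw [map_smul, hx, smul_zero], by
      rw [map_smul, hv]⟩, ?_⟩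
  change α.f j (D.η j (π • x) - D.θ (j - 1) j v) = _
  simp only [map_sub, map_smul, D.α_η (j - 1) j (j + 1) (by omega) rfl, D.α_θ, hx, ← hv,
    map_zero, add_zero, eq_sub_of_add_eq hw.symm]
  module

lemma exists_cocycle_pi_smul_eq_toHom_add_d (hα : ∀ i, Function.Injective (α.f i))
    (hexact : ∀ i, Function.Exact (α.f i) (β.f i)) (hβ : ∀ i, Function.Surjective (β.f i))
    {π : R} {j : ℤ} (hf₃surj : PiSurjectiveOnCocycles π f₃ (j - 1))
    {ξ : (mappingFiber D.c).X j} (hξ : (mappingFiber D.c).d j (j + 1) ξ = 0)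
    {m : M₁.X j} {n : M₂.X (j - 1)}
    (h : α.f j ((D.toHom hα).f j ξ) = α.f j m + M₂.d (j - 1) j n) :
    ∃ (ξ' : (mappingFiber D.c).X j) (w : M₁.X (j - 1)),
      (mappingFiber D.c).d j (j + 1) ξ' = 0 ∧
      π • m = (D.toHom hα).f j ξ' + M₁.d (j - 1) j w := by
  obtain ⟨x, y⟩ := ξ
  obtain ⟨hx, hy⟩ := (mappingFiber_d_eq_zero_iff D.c rfl x y).1 hξ
  have hβn : M₃.d (j - 1) j (β.f _ n) = 0 := by
    rw [Hom.comm_apply_s13, eq_sub_of_add_eq' h.symm, map_sub, (hexact _).apply_apply_eq_zero,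
      (hexact _).apply_apply_eq_zero, sub_zero]
  obtain ⟨p, hp, _, hm₃⟩ := hf₃surj (j - 1 - 1) j (by omega) (by omega) _ hβn
  obtain ⟨m₂, rfl⟩ := hβ _ ‹M₃.X (j - 1 - 1)›
  obtain ⟨w, hw⟩ :=
      (hexact (j - 1) (π • n - D.t _ p - M₂.d (j - 1 - 1) (j - 1) m₂)).1 (by
    rw [map_sub, map_sub, map_smul, D.β_t, ← Hom.comm_apply_s13, hm₃]
    abel)
  refine ⟨((π • x, π • y + p) : P₂.X j × P₃.X (j - 1)), -w,
    (mappingFiber_d_eq_zero_iff D.c rfl _ _).2 ⟨by rw [map_smul, hx, smul_zero], by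
      rw [map_smul, hy, map_add, hp, add_zero, map_smul]⟩, ?_⟩
  apply hα j
  change α.f j (π • m) =
    α.f j (D.η j (π • x) - D.θ (j - 1) j (π • y + p) + M₁.d (j - 1) j (-w))
  have h' : α.f j (D.η j x - D.θ (j - 1) j y) = α.f j m + M₂.d (j - 1) j n := h
  rw [map_sub, D.α_θ] at h'
  simp only [map_sub, map_add, map_smul, map_neg, D.α_θ, hp, map_zero, sub_zero,
    ← Hom.comm_apply_s13, hw, d_comp_d_apply]
  linear_combination (norm := module) (-π) • h'

lemma piSurjectiveOnCocycles_toHom (hα : ∀ i, Function.Injective (α.f i))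
    (hexact : ∀ i, Function.Exact (α.f i) (β.f i)) (hβ : ∀ i, Function.Surjective (β.f i))
    {π : R} {j : ℤ} (hf₂surj : PiSurjectiveOnCocycles π f₂ j)
    (hf₃ker : PiInjectiveOnCocycles π f₃ j)
    (hf₃surj : PiSurjectiveOnCocycles π f₃ (j - 1)) :
    PiSurjectiveOnCocycles (π ^ 3 * r) (D.toHom hα) j := by
  intro i k hi hk m hm
  obtain rfl : i = j - 1 := by omega
  obtain rfl : k = j + 1 := hk.symm
  obtain ⟨ξ, n, hξ, h⟩ := D.exists_cocycle_α_toHom_eq hα hexact hf₂surj hf₃ker hm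
  obtain ⟨ξ', w, hξ', hw⟩ :=
    D.exists_cocycle_pi_smul_eq_toHom_add_d hα hexact hβ hf₃surj hξ h
  refine ⟨ξ', hξ', w, ?_⟩
  rw [← hw, smul_smul, ← mul_assoc, ← pow_succ']

lemma isPiPseudoResolution_toHom (hα : ∀ i, Function.Injective (α.f i))
    (hexact : ∀ i, Function.Exact (α.f i) (β.f i)) (hβ : ∀ i, Function.Surjective (β.f i))
    {π : R} {a b : ℤ} (hf₂ : IsPiPseudoResolution π (a - 1) (b - 1) f₂)
    (hf₃ : IsPiPseudoResolution π (a - 2) (b - 1) f₃) :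
    IsPiPseudoResolution (π ^ 3 * r) (a - 1) b (D.toHom hα) := by
  have hsurj : ∀ j, a - 1 ≤ j → PiSurjectiveOnCocycles (π ^ 3 * r) (D.toHom hα) j :=
    fun j hj => D.piSurjectiveOnCocycles_toHom hα hexact hβ (hf₂.piSurjectiveOnCocycles hj)
      (hf₃.piInjectiveOnCocycles (by omega)) (hf₃.piSurjectiveOnCocycles (by omega))
  refine ⟨fun j => ?_, fun j => ?_, ?_, fun j hj => ?_, ?_⟩
  · have := hf₂.1 j
    have := hf₃.1 (j - 1)
    exact inferInstanceAs (Module.Free R (P₂.X j × P₃.X (j - 1)))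
  · have := hf₂.2.1 j
    have := hf₃.2.1 (j - 1)
    exact inferInstanceAs (Module.Finite R (P₂.X j × P₃.X (j - 1)))
  · rintro j hj ⟨x, y⟩
    rw [hf₂.2.2.1 j (by omega) x, hf₃.2.2.1 (j - 1) (by omega) y]
    rfl
  · exact (isPiIsomorphism_homologyMap_iff _ _ j).2
      ⟨D.piInjectiveOnCocycles_toHom hα hexact (hf₂.piInjectiveOnCocycles hj)
        (hf₂.piSurjectiveOnCocycles (by omega)) (hf₃.piInjectiveOnCocycles (by omega)),
        hsurj j hj.le⟩
  · exact (isPiSurjective_homologyMap_iff _ _ _).2 (hsurj _ le_rfl)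

end FiberComparisonData

end FiberComparison

end CochainComplex

end Development

/-- **Proposition 4.7(3).** There is an integer `l ≥ 0` depending only on `b - a` such that:
for every commutative ring `R`, every `π ∈ R`, and every short exact sequence of cochain
complexes of `R`-modules `0 → M₁^• → M₂^• → M₃^• → 0` (exact in each degree), if `M₂^•` is
`π`-`[a-1,b-1]`-pseudo-coherent and `M₃^•` is `π`-`[a-2,b-1]`-pseudo-coherent, then `M₁^•`
is `π^l`-`[a-1,b]`-pseudo-coherent. -/
theorem isPiPseudoCoherent_of_shortExact_first :
    ∃ l : ℤ → ℕ, ∀ (a b : ℤ), a ≤ b →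
      ∀ (R : Type u) [CommRing R] (π : R) (M₁ M₂ M₃ : CochainComplex (ModuleCat R) ℤ)
        (α : M₁ ⟶ M₂) (β : M₂ ⟶ M₃),
        (∀ i : ℤ, Function.Injective (α.f i)) →
        (∀ i : ℤ, Function.Exact (α.f i) (β.f i)) →
        (∀ i : ℤ, Function.Surjective (β.f i)) →
        IsPiPseudoCoherent π (a - 1) (b - 1) M₂ →
        IsPiPseudoCoherent π (a - 2) (b - 1) M₃ →
        IsPiPseudoCoherent (π ^ l (b - a)) (a - 1) b M₁ := by
  refine ⟨fun d => 3 + 2 * (d + 1).toNat, fun a b hab R _ π M₁ M₂ M₃ α β hα hexact hβ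
    ⟨hM₂, P₂, f₂, hf₂⟩ ⟨_, P₃, f₃, hf₃⟩ => ?_⟩
  have := hf₂.1
  have := hf₃.1
  obtain ⟨c, s, hs⟩ := CochainComplex.exists_hom_lift_up_to_homotopy (f₂ ≫ β) f₃ π
    (show a - 1 ≤ b by omega)
    (fun j hj => hf₂.2.2.1 j (by omega)) (fun j hj => hf₃.piInjectiveOnCocycles (by omega))
    (fun j hj => hf₃.piSurjectiveOnCocycles (by omega))
  obtain ⟨D, rfl⟩ := CochainComplex.FiberComparisonData.exists_of_homotopy hexact hβ c s hs
  refine ⟨fun i hi x => hα i (by simp [hM₂ i (by omega) (α.f i x)]), _, D.toHom hα, ?_⟩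
  change IsPiPseudoResolution (π ^ (3 + 2 * (b - a + 1).toNat)) _ _ _
  rw [show b - a + 1 = b - (a - 1) by ring, pow_add]
  exact D.isPiPseudoResolution_toHom hα hexact hβ hf₂ hf₃
end

section
/- Let a ≤ b be integers. There exists an integer l ≥ 0 depending only on b−a such that: for every commutative ring R, every π ∈ R, every π-exact cochain complex M^• of R-modules with M^i = 0 for all i ∉ [a,b], and every bounded-above cochain complex F^• of flat R-modules, the total complex of the double complex M^• ⊗_R F^• is π^l-exact. (Since F^• can be any bounded-above flat complex representing a complex N^•, this says exactly that the derived tensor product M^• ⊗_R^L N^• is π^l-exact for every complex N^•.) -/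
open CategoryTheory

open MonoidalCategory in
instance curriedTensor_additive {C : Type*} [Category C] [MonoidalCategory C] [Preadditive C]
    [MonoidalPreadditive C] : (curriedTensor C).Additive where
  map_add := by
    intros
    ext
    apply MonoidalPreadditive.add_whiskerRight

open MonoidalCategory in
instance curriedTensor_obj_additive {C : Type*} [Category C] [MonoidalCategory C]
    [Preadditive C] [MonoidalPreadditive C] (X : C) :
    ((curriedTensor C).obj X).Additive where
  map_add := by
    intros
    apply MonoidalPreadditive.whiskerLeft_add

universe u

/-!
Filter the total complex `Tot(M ⊗ F)` by the degree in `M`: `Fil_p` is spanned by the summands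
`M^i ⊗ F^j` with `i ≤ p`, so `Fil_b` is everything and `Fil_{a-1} = 0`. The component of a cycle
`x ∈ Fil_p` in `M^p ⊗ F^{n-p}` is killed by `d_M ⊗ 1`. As `F^{n-p}` is flat, `π`-exactness of `M`
at `p` survives tensoring with it, so `π` times this component is `(d_M ⊗ 1) s`, and `π x - d s` is
a cycle in `Fil_{p-1}`. After `b - a + 1` such steps, `π^(b-a+1) x` is a boundary.
-/

theorem CategoryTheory.ShortComplex.moduleCat_isTorsionBy_homology_iff {R : Type*} [CommRing R]
    (S : ShortComplex (ModuleCat R)) (r : R) :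
    Module.IsTorsionBy R S.homology r ↔
      ∀ x₂ : S.X₂, S.g x₂ = 0 → ∃ x₁ : S.X₁, S.f x₁ = r • x₂ := by
  rw [Module.isTorsionBy_iff_mem_annihilator,
    S.moduleCatHomologyIso.toLinearEquiv.annihilator_eq, ← Module.isTorsionBy_iff_mem_annihilator]
  refine (Module.isTorsionBy_quotient_iff _ r).trans ⟨fun h x₂ hx₂ => ?_, fun h z => ?_⟩
  · obtain ⟨x₁, hx₁⟩ := h ⟨x₂, hx₂⟩
    exact ⟨x₁, congrArg Subtype.val hx₁⟩
  · obtain ⟨x₁, hx₁⟩ := h z.1 z.2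
    exact ⟨x₁, Subtype.ext hx₁⟩

theorem CochainComplex.moduleCat_isTorsionBy_homology_iff {R : Type*} [CommRing R]
    (K : CochainComplex (ModuleCat R) ℤ) (r : R) (n : ℤ) :
    Module.IsTorsionBy R (K.homology n) r ↔
      ∀ x : K.X n, K.d n (n + 1) x = 0 → ∃ y : K.X (n - 1), K.d (n - 1) n y = r • x := by
  rw [← CochainComplex.prev ℤ n, ← CochainComplex.next ℤ n]
  exact (K.sc n).moduleCat_isTorsionBy_homology_iff r

open TensorProduct in
theorem Module.Flat.exists_rTensor_eq_smul {R A B C Q : Type*} [CommRing R] [AddCommGroup A]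
    [AddCommGroup B] [AddCommGroup C] [AddCommGroup Q] [Module R A] [Module R B] [Module R C]
    [Module R Q] [Module.Flat R Q] (r : R) {f : A →ₗ[R] B} {g : B →ₗ[R] C} (hfg : g ∘ₗ f = 0)
    (hr : ∀ x, g x = 0 → ∃ y, f y = r • x) {t : B ⊗[R] Q} (ht : g.rTensor Q t = 0) :
    ∃ s : A ⊗[R] Q, f.rTensor Q s = r • t := by
  let f' : A →ₗ[R] LinearMap.ker g := f.codRestrict _ fun a => LinearMap.congr_fun hfg a
  let q := (LinearMap.range f').mkQ
  obtain ⟨u, rfl⟩ := (Module.Flat.rTensor_exact Q (LinearMap.exact_subtype_ker_map g) t).mp ht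
  have hq : r • q = 0 := by
    ext z
    obtain ⟨y, hy⟩ := hr z.1 z.2
    exact (Submodule.Quotient.mk_eq_zero _).mpr ⟨y, Subtype.ext hy⟩
  have hu : q.rTensor Q (r • u) = 0 := by
    rw [map_smul, ← LinearMap.smul_apply, ← LinearMap.rTensor_smul, hq, LinearMap.rTensor_zero,
      LinearMap.zero_apply]
  obtain ⟨s, hs⟩ :=
    (_root_.rTensor_exact Q f'.exact_map_mkQ_range (Submodule.mkQ_surjective _) (r • u)).mp hu
  refine ⟨s, ?_⟩
  rw [← LinearMap.subtype_comp_codRestrict f (LinearMap.ker g) fun a => LinearMap.congr_fun hfg a,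
    LinearMap.rTensor_comp, LinearMap.comp_apply, hs, map_smul]

open MonoidalCategory in
theorem ModuleCat.tensorObj_eq_zero_of_left {R : Type u} [CommRing R] {M N : ModuleCat.{u} R}
    (hM : ∀ x : M, x = 0) (t : (M ⊗ N : ModuleCat R)) : t = 0 :=
  have : Subsingleton M := ⟨fun x y => (hM x).trans (hM y).symm⟩
  Subsingleton.elim (α := TensorProduct R M N) t 0

namespace CochainComplex

open HomologicalComplex MonoidalCategory

variable {R : Type u} [CommRing R] (M F : CochainComplex (ModuleCat.{u} R) ℤ)

noncomputable def tensorObjProj (n p q : ℤ) (h : p + q = n) :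
    (M.tensorObj F).X n ⟶ M.X p ⊗ F.X q :=
  mapBifunctorDesc fun i j (hij : i + j = n) => if hi : i = p then
    eqToHom (by subst hi; obtain rfl : j = q := (by omega); rfl) else 0

variable {M F}

@[simp]
theorem tensorObjProj_ιTensorObj {n p q : ℤ} (h : p + q = n) (t : (M.X p ⊗ F.X q : ModuleCat R)) :
    tensorObjProj M F n p q h (M.ιTensorObj F p q n h t) = t := by
  have : M.ιTensorObj F p q n h ≫ tensorObjProj M F n p q h = 𝟙 _ := by
    rw [tensorObjProj, ι_mapBifunctorDesc, dif_pos rfl, eqToHom_refl]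
    rfl
  simpa using ConcreteCategory.congr_hom this t

theorem tensorObjProj_ιTensorObj_of_ne {n p q i j : ℤ} (h : p + q = n) (hij : i + j = n)
    (hi : i ≠ p) (t : (M.X i ⊗ F.X j : ModuleCat R)) :
    tensorObjProj M F n p q h (M.ιTensorObj F i j n hij t) = 0 := by
  have : M.ιTensorObj F i j n hij ≫ tensorObjProj M F n p q h = 0 := by
    rw [tensorObjProj, ι_mapBifunctorDesc, dif_neg hi]
  simpa using ConcreteCategory.congr_hom this t

variable (M F) in
noncomputable def tensorObjFiltration (n p : ℤ) : Submodule R ((M.tensorObj F).X n) :=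
  ⨆ (i : ℤ) (_ : i ≤ p), LinearMap.range (M.ιTensorObj F i (n - i) n (by omega)).hom

theorem ιTensorObj_mem_tensorObjFiltration {n p i j : ℤ} (h : i + j = n) (hi : i ≤ p)
    (t : (M.X i ⊗ F.X j : ModuleCat R)) :
    M.ιTensorObj F i j n h t ∈ tensorObjFiltration M F n p := by
  obtain rfl : j = n - i := by omega
  exact Submodule.mem_iSup_of_mem i (Submodule.mem_iSup_of_mem hi ⟨t, rfl⟩)

theorem tensorObjFiltration_le_iff {n p : ℤ} {N : Submodule R ((M.tensorObj F).X n)} :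
    tensorObjFiltration M F n p ≤ N ↔
      ∀ i ≤ p, ∀ t : (M.X i ⊗ F.X (n - i) : ModuleCat R),
        M.ιTensorObj F i (n - i) n (by omega) t ∈ N := by
  simp only [tensorObjFiltration, iSup_le_iff, LinearMap.range_le_iff_comap,
    Submodule.eq_top_iff', Submodule.mem_comap]

theorem tensorObjFiltration_eq_bot {a n p : ℤ} (hM : ∀ i < a, ∀ x : M.X i, x = 0) (hp : p < a) :
    tensorObjFiltration M F n p = ⊥ := by
  refine eq_bot_iff.mpr (tensorObjFiltration_le_iff.mpr fun i hi t => ?_)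
  rw [ModuleCat.tensorObj_eq_zero_of_left (hM i (by omega)) t, map_zero]
  exact zero_mem _

theorem tensorObjFiltration_eq_top {b n p : ℤ} (hM : ∀ i, b < i → ∀ x : M.X i, x = 0)
    (hp : b ≤ p) : tensorObjFiltration M F n p = ⊤ := by
  have hq : ModuleCat.ofHom (tensorObjFiltration M F n p).mkQ = 0 := by
    refine mapBifunctor.hom_ext fun i j (hij : i + j = n) =>
      ModuleCat.hom_ext (LinearMap.ext fun t => ?_)
    rw [Limits.comp_zero]
    show (tensorObjFiltration M F n p).mkQ (M.ιTensorObj F i j n hij t) = 0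
    rw [Submodule.mkQ_apply, Submodule.Quotient.mk_eq_zero]
    rcases le_or_gt i p with hi | hi
    · exact ιTensorObj_mem_tensorObjFiltration hij hi t
    · rw [ModuleCat.tensorObj_eq_zero_of_left (hM i (by omega)) t, map_zero]
      exact zero_mem _
  rw [← Submodule.ker_mkQ (tensorObjFiltration M F n p), ← ModuleCat.hom_ofHom (Submodule.mkQ _),
    hq]
  exact LinearMap.ker_zero

theorem exists_eq_ιTensorObj_add_of_mem_tensorObjFiltration {n p : ℤ} {x : (M.tensorObj F).X n}
    (hx : x ∈ tensorObjFiltration M F n p) :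
    ∃ (t : (M.X p ⊗ F.X (n - p) : ModuleCat R)), ∃ x' ∈ tensorObjFiltration M F n (p - 1),
      x = M.ιTensorObj F p (n - p) n (by omega) t + x' := by
  have : tensorObjFiltration M F n p ≤
      LinearMap.range (M.ιTensorObj F p (n - p) n (by omega)).hom ⊔
        tensorObjFiltration M F n (p - 1) := by
    refine tensorObjFiltration_le_iff.mpr fun i hi t => ?_
    rcases hi.lt_or_eq with hi | rfl
    · exact Submodule.mem_sup_right (ιTensorObj_mem_tensorObjFiltration _ (by omega) t)
    · exact Submodule.mem_sup_left ⟨t, rfl⟩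
  obtain ⟨_, ⟨t, rfl⟩, x', hx', rfl⟩ := Submodule.mem_sup.mp (this hx)
  exact ⟨t, x', hx', rfl⟩

theorem tensorObjProj_eq_zero_of_mem_tensorObjFiltration {n p i j : ℤ} (h : i + j = n)
    (hpi : p < i) {x : (M.tensorObj F).X n} (hx : x ∈ tensorObjFiltration M F n p) :
    tensorObjProj M F n i j h x = 0 := by
  have : tensorObjFiltration M F n p ≤ LinearMap.ker (tensorObjProj M F n i j h).hom :=
    tensorObjFiltration_le_iff.mpr fun k hk t =>
      tensorObjProj_ιTensorObj_of_ne h _ (by omega) t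
  exact this hx

theorem d_ιTensorObj_apply {p q n p' q' n' : ℤ} (h : p + q = n) (hp : p + 1 = p')
    (hq : q + 1 = q') (hn : n + 1 = n') (t : (M.X p ⊗ F.X q : ModuleCat R)) :
    (M.tensorObj F).d n n' (M.ιTensorObj F p q n h t) =
      M.ιTensorObj F p' q n' (by omega) ((M.d p p' ▷ F.X q) t) +
        (ComplexShape.up ℤ).ε p • M.ιTensorObj F p q' n' (by omega) ((M.X p ◁ F.d q q') t) := by
  have : M.ιTensorObj F p q n h ≫ (M.tensorObj F).d n n' =
      (M.d p p' ▷ F.X q) ≫ M.ιTensorObj F p' q n' (by omega) +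
        (ComplexShape.up ℤ).ε p • ((M.X p ◁ F.d q q') ≫ M.ιTensorObj F p q' n' (by omega)) := by
    rw [mapBifunctor.d_eq, Preadditive.comp_add, mapBifunctor.ι_D₁, mapBifunctor.ι_D₂,
      mapBifunctor.d₁_eq _ _ _ _ (show (ComplexShape.up ℤ).Rel p p' from hp) _ _
        (show p' + q = n' by omega),
      mapBifunctor.d₂_eq _ _ _ _ _ (show (ComplexShape.up ℤ).Rel q q' from hq) _
        (show p + q' = n' by omega)]
    exact congrArg₂ _ (one_smul _ _) rfl
  simpa using ConcreteCategory.congr_hom this t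

theorem d_mem_tensorObjFiltration {n n' p : ℤ} (hn : n + 1 = n') {x : (M.tensorObj F).X n}
    (hx : x ∈ tensorObjFiltration M F n p) :
    (M.tensorObj F).d n n' x ∈ tensorObjFiltration M F n' (p + 1) := by
  have : tensorObjFiltration M F n p ≤
      (tensorObjFiltration M F n' (p + 1)).comap ((M.tensorObj F).d n n').hom := by
    refine tensorObjFiltration_le_iff.mpr fun i hi t => ?_
    change (M.tensorObj F).d n n' _ ∈ tensorObjFiltration M F n' (p + 1)
    rw [d_ιTensorObj_apply _ rfl rfl hn]
    refine add_mem (ιTensorObj_mem_tensorObjFiltration _ (by omega) _) ?_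
    exact Submodule.smul_of_tower_mem _ _ (ιTensorObj_mem_tensorObjFiltration _ (by omega) _)
  exact this hx

theorem whiskerRight_d_apply_eq_zero_of_d_eq_zero {n p : ℤ}
    {t : (M.X p ⊗ F.X (n - p) : ModuleCat R)} {x' : (M.tensorObj F).X n}
    (hx' : x' ∈ tensorObjFiltration M F n (p - 1))
    (hd : (M.tensorObj F).d n (n + 1) (M.ιTensorObj F p (n - p) n (by omega) t + x') = 0) :
    (M.d p (p + 1) ▷ F.X (n - p)) t = 0 := by
  have := congrArg (tensorObjProj M F (n + 1) (p + 1) (n - p) (by omega)) hd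
  rwa [map_add, d_ιTensorObj_apply _ rfl rfl rfl, map_add, map_add, tensorObjProj_ιTensorObj,
    Units.smul_def, map_zsmul, tensorObjProj_ιTensorObj_of_ne _ _ (by omega), smul_zero, add_zero,
    tensorObjProj_eq_zero_of_mem_tensorObjFiltration _ (by omega)
      (d_mem_tensorObjFiltration rfl hx'), add_zero, map_zero] at this

theorem exists_smul_sub_d_mem_tensorObjFiltration (π : R)
    (hM : ∀ p, Module.IsTorsionBy R (M.homology p) π)
    (hF : ∀ i, Module.Flat R (F.X i)) {n p : ℤ} {x : (M.tensorObj F).X n}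
    (hx : (M.tensorObj F).d n (n + 1) x = 0) (hxp : x ∈ tensorObjFiltration M F n p) :
    ∃ w, π • x - (M.tensorObj F).d (n - 1) n w ∈ tensorObjFiltration M F n (p - 1) := by
  obtain ⟨t, x', hx', rfl⟩ := exists_eq_ιTensorObj_add_of_mem_tensorObjFiltration hxp
  have hdd : (M.d p (p + 1)).hom ∘ₗ (M.d (p - 1) p).hom = 0 := by
    rw [← ModuleCat.hom_comp, M.d_comp_d, ModuleCat.hom_zero]
  obtain ⟨s, hs⟩ := (hF (n - p)).exists_rTensor_eq_smul π hdd
    ((M.moduleCat_isTorsionBy_homology_iff π p).mp (hM p))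
    (whiskerRight_d_apply_eq_zero_of_d_eq_zero hx' hx)
  refine ⟨M.ιTensorObj F (p - 1) (n - p) (n - 1) (by omega) s, ?_⟩
  rw [d_ιTensorObj_apply (p' := p) (q' := n - p + 1) _ (by omega) rfl (by omega)]
  have hs' : (M.d (p - 1) p ▷ F.X (n - p)) s = π • t := hs
  rw [hs', map_smul, smul_add, add_sub_add_left_eq_sub]
  exact sub_mem (Submodule.smul_mem _ _ hx')
    (Submodule.smul_of_tower_mem _ _ (ιTensorObj_mem_tensorObjFiltration _ le_rfl _))

theorem pow_smul_mem_range_d_of_mem_tensorObjFiltration {a : ℤ} (π : R)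
    (hMa : ∀ i < a, ∀ x : M.X i, x = 0)
    (hM : ∀ p, Module.IsTorsionBy R (M.homology p) π)
    (hF : ∀ i, Module.Flat R (F.X i)) (k : ℕ) {n p : ℤ} (hp : p < a + k)
    {x : (M.tensorObj F).X n} (hx : (M.tensorObj F).d n (n + 1) x = 0)
    (hxp : x ∈ tensorObjFiltration M F n p) :
    ∃ y, (M.tensorObj F).d (n - 1) n y = π ^ k • x := by
  induction k generalizing p x with
  | zero =>
    rw [tensorObjFiltration_eq_bot hMa (by omega), Submodule.mem_bot] at hxp
    exact ⟨0, by rw [map_zero, hxp, smul_zero]⟩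
  | succ k ih =>
    obtain ⟨w, hw⟩ := exists_smul_sub_d_mem_tensorObjFiltration π hM hF hx hxp
    have hcycle : (M.tensorObj F).d n (n + 1) (π • x - (M.tensorObj F).d (n - 1) n w) = 0 := by
      rw [map_sub, map_smul, hx, smul_zero, zero_sub, neg_eq_zero]
      exact ConcreteCategory.congr_hom ((M.tensorObj F).d_comp_d (n - 1) n (n + 1)) w
    obtain ⟨y, hy⟩ := ih (by omega) hcycle hw
    refine ⟨y + π ^ k • w, ?_⟩
    rw [map_add, hy, map_smul, smul_sub, sub_add_cancel, ← mul_smul, ← pow_succ]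

end CochainComplex

/-- **Lemma 4.9.** There is an integer `l ≥ 0` depending only on `b - a` such that: for every
commutative ring `R`, every `π ∈ R`, every `π`-exact cochain complex `M^•` of `R`-modules
vanishing outside `[a,b]`, and every bounded-above cochain complex `F^•` of flat
`R`-modules, the total complex of the double complex `M^• ⊗_R F^•` (which computes the
derived tensor product `M^• ⊗_R^L N^•` for any complex `N^•` represented by such an `F^•`)
is `π^l`-exact. -/
theorem tensor_pi_exact :
    ∃ l : ℤ → ℕ, ∀ (a b : ℤ), a ≤ b →
      ∀ (R : Type u) [CommRing R] (π : R) (M F : CochainComplex (ModuleCat R) ℤ),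
        (∀ i : ℤ, i < a ∨ b < i → ∀ x : M.X i, x = 0) →
        (∀ n : ℤ, ∀ x : M.homology n, π • x = 0) →
        (∀ i : ℤ, Module.Flat R (F.X i)) →
        (∃ b' : ℤ, ∀ i : ℤ, b' < i → ∀ x : F.X i, x = 0) →
        ∀ n : ℤ, ∀ x : (HomologicalComplex.tensorObj M F).homology n,
          π ^ l (b - a) • x = 0 := by
  refine ⟨fun d => (d + 1).toNat, fun a b _ R _ π M F hM hπ hF _ n x => ?_⟩
  refine (CochainComplex.moduleCat_isTorsionBy_homology_iff (M.tensorObj F) _ n).mpr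
    (fun y hy => ?_) (x := x)
  have hy_top : y ∈ M.tensorObjFiltration F n b := by
    simp [M.tensorObjFiltration_eq_top (fun i hi => hM i (.inr hi)) le_rfl]
  exact M.pow_smul_mem_range_d_of_mem_tensorObjFiltration π (fun i hi => hM i (.inl hi))
    (fun p x => hπ p x) hF (b - a + 1).toNat (by omega) hy hy_top
end
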